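/- arXiv:2311.15885 — 7 statements merged into one kernel-verified Lean document; each statement's English description precedes it below -/
import Mathlib

section
/- Let k ≥ 1, let n ≥ 2, and let 𝒜, ℬ be two n-element structures over a common finite relational signature. If some sentence of L^k of quantifier depth r distinguishes 𝒜 from ℬ, then some sentence φ of L^k with quant(φ) ≤ (n^r − 1)/(n − 1) distinguishes 𝒜 from ℬ. -/
namespace QVT

/-- A finite relational signature: a finite type of relation symbols, each with an arity. -/
structure Signature : Type 1 where
  symbols : Type
  fin : Fintype symbols
  arity : symbols → ℕ

/-- A structure over a relational signature. -/
structure Struct (σ : Signature) : Type 1 where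
  carrier : Type
  rel : (R : σ.symbols) → (Fin (σ.arity R) → carrier) → Prop

/-- First-order formulas over the signature `σ`, with variables indexed by `ℕ`
(variable `i` represents `x_{i+1}`; variables may be reused and requantified). -/
inductive Fml (σ : Signature) : Type
  | eq : ℕ → ℕ → Fml σ
  | rel : (R : σ.symbols) → (Fin (σ.arity R) → ℕ) → Fml σ
  | not : Fml σ → Fml σ
  | and : Fml σ → Fml σ → Fml σ
  | or : Fml σ → Fml σ → Fml σ
  | ex : ℕ → Fml σ → Fml σ
  | all : ℕ → Fml σ → Fml σ

namespace Fml

variable {σ : Signature}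

/-- Satisfaction of a formula in a structure under a (total) variable assignment. -/
def Sat (M : Struct σ) : (ℕ → M.carrier) → Fml σ → Prop
  | f, .eq i j => f i = f j
  | f, .rel R v => M.rel R fun m => f (v m)
  | f, .not φ => ¬ Sat M f φ
  | f, .and φ ψ => Sat M f φ ∧ Sat M f ψ
  | f, .or φ ψ => Sat M f φ ∨ Sat M f ψ
  | f, .ex i φ => ∃ a : M.carrier, Sat M (Function.update f i a) φ
  | f, .all i φ => ∀ a : M.carrier, Sat M (Function.update f i a) φ

/-- All variables (free or bound) occurring in a formula. -/
def vars : Fml σ → Finset ℕ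
  | .eq i j => {i, j}
  | .rel _ v => Finset.univ.image v
  | .not φ => vars φ
  | .and φ ψ => vars φ ∪ vars ψ
  | .or φ ψ => vars φ ∪ vars ψ
  | .ex i φ => insert i (vars φ)
  | .all i φ => insert i (vars φ)

/-- The free variables of a formula. -/
def freeVars : Fml σ → Finset ℕ
  | .eq i j => {i, j}
  | .rel _ v => Finset.univ.image v
  | .not φ => freeVars φ
  | .and φ ψ => freeVars φ ∪ freeVars ψ
  | .or φ ψ => freeVars φ ∪ freeVars ψ
  | .ex i φ => (freeVars φ).erase i
  | .all i φ => (freeVars φ).erase i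

/-- The number of quantifier occurrences in a formula. -/
def quant : Fml σ → ℕ
  | .eq _ _ => 0
  | .rel _ _ => 0
  | .not φ => quant φ
  | .and φ ψ => quant φ + quant ψ
  | .or φ ψ => quant φ + quant ψ
  | .ex _ φ => quant φ + 1
  | .all _ φ => quant φ + 1

/-- The quantifier depth (quantifier rank) of a formula. -/
def depth : Fml σ → ℕ
  | .eq _ _ => 0
  | .rel _ _ => 0
  | .not φ => depth φ
  | .and φ ψ => max (depth φ) (depth ψ)
  | .or φ ψ => max (depth φ) (depth ψ)
  | .ex _ φ => depth φ + 1
  | .all _ φ => depth φ + 1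

/-- The size (total number of symbols) of a formula. -/
def size : Fml σ → ℕ
  | .eq _ _ => 3
  | .rel R _ => 1 + σ.arity R
  | .not φ => size φ + 1
  | .and φ ψ => size φ + size ψ + 1
  | .or φ ψ => size φ + size ψ + 1
  | .ex _ φ => size φ + 2
  | .all _ φ => size φ + 2

/-- The existential-positive formulas: built from atomic formulas using only
`∧`, `∨` and `∃`. -/
def ExPos : Fml σ → Prop
  | .eq _ _ => True
  | .rel _ _ => True
  | .not _ => False
  | .and φ ψ => ExPos φ ∧ ExPos ψ
  | .or φ ψ => ExPos φ ∧ ExPos ψ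
  | .ex _ φ => ExPos φ
  | .all _ _ => False

end Fml

/-- `φ` is a formula of `L^k`: it only uses the variables `x_1, …, x_k`
(indices `0, …, k-1`). -/
def UsesVars {σ : Signature} (k : ℕ) (φ : Fml σ) : Prop :=
  ∀ i ∈ φ.vars, i < k

/-- A sentence is a formula with no free variables. -/
def IsSentence {σ : Signature} (φ : Fml σ) : Prop := φ.freeVars = ∅

/-- Satisfaction of a sentence (assignment-independent for sentences over
nonempty structures). -/
def SatS {σ : Signature} (M : Struct σ) (φ : Fml σ) : Prop :=
  ∀ f : ℕ → M.carrier, Fml.Sat M f φ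

/-- `φ` distinguishes `A` from `B`: `A ⊨ φ` and `B ⊭ φ`. -/
def Distinguishes {σ : Signature} (A B : Struct σ) (φ : Fml σ) : Prop :=
  SatS A φ ∧ ¬ SatS B φ

/-- `A` and `B` agree on `φ`. -/
def AgreeOn {σ : Signature} (A B : Struct σ) (φ : Fml σ) : Prop :=
  SatS A φ ↔ SatS B φ

/-- A pebbled structure: a structure together with a partial assignment of the
variables to elements. -/
structure Pebbled (σ : Signature) : Type 1 where
  M : Struct σ
  α : ℕ → Option M.carrier

/-- The domain of the partial assignment of a pebbled structure. -/
def Pebbled.dom {σ : Signature} (P : Pebbled σ) : Set ℕ := {i | P.α i ≠ none}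

/-- A `k`-pebbled structure: only the variables `x_1, …, x_k` may be assigned. -/
def Pebbled.IsK {σ : Signature} (k : ℕ) (P : Pebbled σ) : Prop :=
  ∀ i, k ≤ i → P.α i = none

/-- Satisfaction for pebbled structures: `φ` holds under every total extension of
the partial assignment. -/
def PSat {σ : Signature} (P : Pebbled σ) (φ : Fml σ) : Prop :=
  ∀ f : ℕ → P.M.carrier, (∀ i a, P.α i = some a → f i = a) → Fml.Sat P.M f φ

/-- Two sets of pebbled structures disagree on `φ`: every member of `𝔄`
satisfies `φ` and no member of `𝔅` does. -/
def DisagreeOn {σ : Signature} (𝔄 𝔅 : Set (Pebbled σ)) (φ : Fml σ) : Prop :=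
  (∀ P ∈ 𝔄, PSat P φ) ∧ (∀ P ∈ 𝔅, ¬ PSat P φ)

/-! ### Auxiliary development for Statement 4 -/

section Aux

variable {σ : Signature}

open Fml

/-- Nonempty conjunction of a list of formulas (junk value on `[]`). -/
def conj1 : List (Fml σ) → Fml σ
  | [] => .eq 0 0
  | [φ] => φ
  | φ :: ψ :: l => .and φ (conj1 (ψ :: l))

lemma sat_conj1 {M : Struct σ} {f : ℕ → M.carrier} :
    ∀ {l : List (Fml σ)}, l ≠ [] → (Fml.Sat M f (conj1 l) ↔ ∀ φ ∈ l, Fml.Sat M f φ)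
  | [], h => absurd rfl h
  | [φ], _ => by simp [conj1]
  | φ :: ψ :: l, _ => by
      rw [show conj1 (φ :: ψ :: l) = .and φ (conj1 (ψ :: l)) from rfl]
      rw [show Fml.Sat M f (.and φ (conj1 (ψ :: l))) ↔
        Fml.Sat M f φ ∧ Fml.Sat M f (conj1 (ψ :: l)) from Iff.rfl]
      rw [sat_conj1 (l := ψ :: l) (by simp)]
      simp

lemma quant_conj1 : ∀ (l : List (Fml σ)), (conj1 l).quant = (l.map Fml.quant).sum
  | [] => rfl
  | [φ] => by simp [conj1]
  | φ :: ψ :: l => by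
      rw [show conj1 (φ :: ψ :: l) = .and φ (conj1 (ψ :: l)) from rfl]
      show φ.quant + (conj1 (ψ :: l)).quant = _
      rw [quant_conj1 (ψ :: l)]
      simp

lemma mem_vars_conj1 : ∀ {l : List (Fml σ)}, l ≠ [] →
    ∀ j ∈ (conj1 l).vars, ∃ φ ∈ l, j ∈ φ.vars
  | [], h => absurd rfl h
  | [φ], _ => by intro j hj; exact ⟨φ, by simp, by simpa [conj1] using hj⟩
  | φ :: ψ :: l, _ => by
      intro j hj
      rw [show conj1 (φ :: ψ :: l) = .and φ (conj1 (ψ :: l)) from rfl] at hj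
      rw [show (Fml.and φ (conj1 (ψ :: l))).vars = φ.vars ∪ (conj1 (ψ :: l)).vars
        from rfl] at hj
      rcases Finset.mem_union.mp hj with h | h
      · exact ⟨φ, by simp, h⟩
      · obtain ⟨χ, hχ, hjχ⟩ := mem_vars_conj1 (l := ψ :: l) (by simp) j h
        exact ⟨χ, by simp [hχ], hjχ⟩

lemma mem_freeVars_conj1 : ∀ {l : List (Fml σ)}, l ≠ [] →
    ∀ j ∈ (conj1 l).freeVars, ∃ φ ∈ l, j ∈ φ.freeVars
  | [], h => absurd rfl h
  | [φ], _ => by intro j hj; exact ⟨φ, by simp, by simpa [conj1] using hj⟩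
  | φ :: ψ :: l, _ => by
      intro j hj
      rw [show conj1 (φ :: ψ :: l) = .and φ (conj1 (ψ :: l)) from rfl] at hj
      rw [show (Fml.and φ (conj1 (ψ :: l))).freeVars
        = φ.freeVars ∪ (conj1 (ψ :: l)).freeVars from rfl] at hj
      rcases Finset.mem_union.mp hj with h | h
      · exact ⟨φ, by simp, h⟩
      · obtain ⟨χ, hχ, hjχ⟩ := mem_freeVars_conj1 (l := ψ :: l) (by simp) j h
        exact ⟨χ, by simp [hχ], hjχ⟩

/-- Satisfaction only depends on the values of the free variables. -/
lemma sat_congr {M : Struct σ} :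
    ∀ (φ : Fml σ) (f f' : ℕ → M.carrier),
      (∀ j ∈ φ.freeVars, f j = f' j) → (Fml.Sat M f φ ↔ Fml.Sat M f' φ) := by
  intro φ
  induction φ with
  | eq i j =>
      intro f f' h
      show f i = f j ↔ f' i = f' j
      rw [h i (by simp [Fml.freeVars]), h j (by simp [Fml.freeVars])]
  | rel R v =>
      intro f f' h
      show M.rel R (fun m => f (v m)) ↔ M.rel R (fun m => f' (v m))
      have : (fun m => f (v m)) = fun m => f' (v m) := by
        funext m
        exact h (v m) (by simp [Fml.freeVars])
      rw [this]
  | not φ ih =>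
      intro f f' h
      exact not_congr (ih f f' h)
  | and φ ψ ihφ ihψ =>
      intro f f' h
      exact and_congr (ihφ f f' fun j hj => h j (by simp [Fml.freeVars, hj]))
        (ihψ f f' fun j hj => h j (by simp [Fml.freeVars, hj]))
  | or φ ψ ihφ ihψ =>
      intro f f' h
      exact or_congr (ihφ f f' fun j hj => h j (by simp [Fml.freeVars, hj]))
        (ihψ f f' fun j hj => h j (by simp [Fml.freeVars, hj]))
  | ex i φ ih =>
      intro f f' h
      refine exists_congr fun a => ih _ _ fun j hj => ?_
      by_cases hji : j = i
      · subst hji; simp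
      · simp [Function.update, hji]
        exact h j (by simp [Fml.freeVars, Finset.mem_erase, hji, hj])
  | all i φ ih =>
      intro f f' h
      refine forall_congr' fun a => ih _ _ fun j hj => ?_
      by_cases hji : j = i
      · subst hji; simp
      · simp [Function.update, hji]
        exact h j (by simp [Fml.freeVars, Finset.mem_erase, hji, hj])

/-- Atomic agreement of two assignments on a set `D` of variables. -/
def Atom (A B : Struct σ) (f : ℕ → A.carrier) (g : ℕ → B.carrier) (D : Set ℕ) : Prop :=
  (∀ i ∈ D, ∀ j ∈ D, (f i = f j ↔ g i = g j)) ∧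
  ∀ (R : σ.symbols) (v : Fin (σ.arity R) → ℕ), (∀ m, v m ∈ D) →
    (A.rel R (fun m => f (v m)) ↔ B.rel R (fun m => g (v m)))

/-- The `r`-round `k`-pebble game equivalence (with atomic agreement at every stage). -/
def GEq (k : ℕ) (A B : Struct σ) :
    ℕ → (ℕ → A.carrier) → (ℕ → B.carrier) → Set ℕ → Prop
  | 0, f, g, D => Atom A B f g D
  | r+1, f, g, D => Atom A B f g D ∧ ∀ i < k,
      (∀ a, ∃ b, GEq k A B r (Function.update f i a) (Function.update g i b) (insert i D)) ∧
      (∀ b, ∃ a, GEq k A B r (Function.update f i a) (Function.update g i b) (insert i D))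

lemma GEq.atom {k : ℕ} {A B : Struct σ} {r f g D} (h : GEq k A B r f g D) :
    Atom A B f g D := by
  cases r with
  | zero => exact h
  | succ r => exact h.1

/-- Soundness: game-equivalent configurations agree on all formulas of small depth. -/
lemma GEq.sound {k : ℕ} {A B : Struct σ} :
    ∀ (φ : Fml σ) (r : ℕ) (f : ℕ → A.carrier) (g : ℕ → B.carrier) (D : Set ℕ),
      φ.depth ≤ r → UsesVars k φ → (∀ j ∈ φ.freeVars, j ∈ D) →
      GEq k A B r f g D → (Fml.Sat A f φ ↔ Fml.Sat B g φ) := by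
  intro φ
  induction φ with
  | eq i j =>
      intro r f g D _ _ hfree hG
      exact hG.atom.1 i (hfree i (by simp [Fml.freeVars]))
        j (hfree j (by simp [Fml.freeVars]))
  | rel R v =>
      intro r f g D _ _ hfree hG
      exact hG.atom.2 R v fun m => hfree (v m) (by simp [Fml.freeVars])
  | not φ ih =>
      intro r f g D hd hu hfree hG
      exact not_congr (ih r f g D hd hu hfree hG)
  | and φ ψ ihφ ihψ =>
      intro r f g D hd hu hfree hG
      simp only [Fml.depth, max_le_iff] at hd
      exact and_congr
        (ihφ r f g D hd.1 (fun j hj => hu j (by simp [Fml.vars, hj]))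
          (fun j hj => hfree j (by simp [Fml.freeVars, hj])) hG)
        (ihψ r f g D hd.2 (fun j hj => hu j (by simp [Fml.vars, hj]))
          (fun j hj => hfree j (by simp [Fml.freeVars, hj])) hG)
  | or φ ψ ihφ ihψ =>
      intro r f g D hd hu hfree hG
      simp only [Fml.depth, max_le_iff] at hd
      exact or_congr
        (ihφ r f g D hd.1 (fun j hj => hu j (by simp [Fml.vars, hj]))
          (fun j hj => hfree j (by simp [Fml.freeVars, hj])) hG)
        (ihψ r f g D hd.2 (fun j hj => hu j (by simp [Fml.vars, hj]))
          (fun j hj => hfree j (by simp [Fml.freeVars, hj])) hG)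
  | ex i φ ih =>
      intro r f g D hd hu hfree hG
      cases r with
      | zero => simp [Fml.depth] at hd
      | succ r =>
        have hi : i < k := hu i (by simp [Fml.vars])
        obtain ⟨hab, hba⟩ := hG.2 i hi
        have hu' : UsesVars k φ := fun j hj => hu j (by simp [Fml.vars, hj])
        have hd' : φ.depth ≤ r := by simp [Fml.depth] at hd; omega
        have hfree' : ∀ j ∈ φ.freeVars, j ∈ insert i D := by
          intro j hj
          by_cases hji : j = i
          · exact hji ▸ Set.mem_insert _ _
          · exact Set.mem_insert_iff.2 (Or.inr
              (hfree j (by simp [Fml.freeVars, Finset.mem_erase, hji, hj])))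
        constructor
        · rintro ⟨a, ha⟩
          obtain ⟨b, hb⟩ := hab a
          exact ⟨b, (ih r _ _ _ hd' hu' hfree' hb).mp ha⟩
        · rintro ⟨b, hb⟩
          obtain ⟨a, ha⟩ := hba b
          exact ⟨a, (ih r _ _ _ hd' hu' hfree' ha).mpr hb⟩
  | all i φ ih =>
      intro r f g D hd hu hfree hG
      cases r with
      | zero => simp [Fml.depth] at hd
      | succ r =>
        have hi : i < k := hu i (by simp [Fml.vars])
        obtain ⟨hab, hba⟩ := hG.2 i hi
        have hu' : UsesVars k φ := fun j hj => hu j (by simp [Fml.vars, hj])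
        have hd' : φ.depth ≤ r := by simp [Fml.depth] at hd; omega
        have hfree' : ∀ j ∈ φ.freeVars, j ∈ insert i D := by
          intro j hj
          by_cases hji : j = i
          · exact hji ▸ Set.mem_insert _ _
          · exact Set.mem_insert_iff.2 (Or.inr
              (hfree j (by simp [Fml.freeVars, Finset.mem_erase, hji, hj])))
        constructor
        · intro h b
          obtain ⟨a, ha⟩ := hba b
          exact (ih r _ _ _ hd' hu' hfree' ha).mp (h a)
        · intro h a
          obtain ⟨b, hb⟩ := hab a
          exact (ih r _ _ _ hd' hu' hfree' hb).mpr (h b)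

/-- A quantifier-free formula witnessing failure of atomic agreement. -/
lemma atom_fail {k : ℕ} {A B : Struct σ} {f : ℕ → A.carrier} {g : ℕ → B.carrier}
    {D : Set ℕ} (hD : ∀ i ∈ D, i < k) (h : ¬ Atom A B f g D) :
    ∃ φ : Fml σ, UsesVars k φ ∧ (∀ j ∈ φ.freeVars, j ∈ D) ∧ φ.quant = 0 ∧
      Fml.Sat A f φ ∧ ¬ Fml.Sat B g φ := by
  rcases not_and_or.mp h with h | h
  · push_neg at h
    obtain ⟨i, hi, j, hj, hij⟩ := h
    rcases hij with ⟨hf, hg⟩ | ⟨hf, hg⟩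
    · refine ⟨.eq i j, ?_, ?_, rfl, hf, hg⟩
      · intro m hm
        simp [Fml.vars] at hm
        rcases hm with rfl | rfl
        exacts [hD _ hi, hD _ hj]
      · intro m hm
        simp [Fml.freeVars] at hm
        rcases hm with rfl | rfl
        exacts [hi, hj]
    · refine ⟨.not (.eq i j), ?_, ?_, rfl, hf, fun hng => hng hg⟩
      · intro m hm
        simp [Fml.vars] at hm
        rcases hm with rfl | rfl
        exacts [hD _ hi, hD _ hj]
      · intro m hm
        simp [Fml.freeVars] at hm
        rcases hm with rfl | rfl
        exacts [hi, hj]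
  · push_neg at h
    obtain ⟨R, v, hv, hR⟩ := h
    rcases hR with ⟨hAr, hBr⟩ | ⟨hAr, hBr⟩
    · refine ⟨.rel R v, ?_, ?_, rfl, hAr, hBr⟩
      · intro m hm
        simp [Fml.vars] at hm
        obtain ⟨x, rfl⟩ := hm
        exact hD _ (hv x)
      · intro m hm
        simp [Fml.freeVars] at hm
        obtain ⟨x, rfl⟩ := hm
        exact hv x
    · refine ⟨.not (.rel R v), ?_, ?_, rfl, hAr, fun hng => hng hBr⟩
      · intro m hm
        simp [Fml.vars] at hm
        obtain ⟨x, rfl⟩ := hm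
        exact hD _ (hv x)
      · intro m hm
        simp [Fml.freeVars] at hm
        obtain ⟨x, rfl⟩ := hm
        exact hv x

/-- `G n r = 1 + n + ⋯ + n^(r-1)`. -/
def G (n : ℕ) : ℕ → ℕ
  | 0 => 0
  | r+1 => n * G n r + 1

lemma G_eq {n : ℕ} (hn : 2 ≤ n) (r : ℕ) : G n r = (n ^ r - 1) / (n - 1) := by
  obtain ⟨m, rfl⟩ : ∃ m, n = m + 2 := ⟨n - 2, by omega⟩
  have key : ∀ r, (m + 1) * G (m + 2) r = (m + 2) ^ r - 1 := by
    intro r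
    induction r with
    | zero => simp [G]
    | succ r ih =>
      have h1 : 1 ≤ (m + 2) ^ r := Nat.one_le_pow _ _ (by omega)
      obtain ⟨x, hx⟩ : ∃ x, (m + 2) ^ r = x + 1 := ⟨(m + 2) ^ r - 1, by omega⟩
      rw [hx] at ih
      simp only [G, pow_succ, hx]
      have e : (x + 1) * (m + 2) = (m + 1) * ((m + 2) * G (m + 2) r + 1) + 1 := by
        have : x = (m + 1) * G (m + 2) r := by omega
        rw [this]; ring
      omega
  have h2 : (m + 2) - 1 = m + 1 := by omega
  rw [h2, ← key r, Nat.mul_div_cancel_left _ (by omega)]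

/-- Completeness: non-equivalent configurations are distinguished by a formula with
few quantifiers. -/
lemma GEq.complete {k n : ℕ} {A B : Struct σ}
    [Fintype A.carrier] [Fintype B.carrier]
    (hcA : Fintype.card A.carrier = n) (hcB : Fintype.card B.carrier = n) (hn : 2 ≤ n) :
    ∀ (r : ℕ) (f : ℕ → A.carrier) (g : ℕ → B.carrier) (D : Set ℕ),
      (∀ i ∈ D, i < k) → ¬ GEq k A B r f g D →
      ∃ φ : Fml σ, UsesVars k φ ∧ (∀ j ∈ φ.freeVars, j ∈ D) ∧ φ.quant ≤ G n r ∧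
        Fml.Sat A f φ ∧ ¬ Fml.Sat B g φ := by
  intro r
  induction r with
  | zero =>
    intro f g D hD h
    obtain ⟨φ, h1, h2, h3, h4, h5⟩ := atom_fail hD h
    exact ⟨φ, h1, h2, by simp [h3, G], h4, h5⟩
  | succ r ih =>
    intro f g D hD h
    have h' : ¬ (Atom A B f g D ∧ ∀ i < k,
        (∀ a, ∃ b, GEq k A B r (Function.update f i a) (Function.update g i b) (insert i D)) ∧
        (∀ b, ∃ a, GEq k A B r (Function.update f i a) (Function.update g i b) (insert i D))) := h
    rcases not_and_or.mp h' with h | h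
    · obtain ⟨φ, h1, h2, h3, h4, h5⟩ := atom_fail hD h
      exact ⟨φ, h1, h2, by simp [h3], h4, h5⟩
    · push_neg at h
      obtain ⟨i, hi, h⟩ := h
      have hD' : ∀ j ∈ insert i D, j < k := by
        intro j hj
        rcases Set.mem_insert_iff.mp hj with rfl | hj
        exacts [hi, hD j hj]
      have hBne : Nonempty B.carrier := by
        rw [← Fintype.card_pos_iff]; omega
      have hAne : Nonempty A.carrier := by
        rw [← Fintype.card_pos_iff]; omega
      by_cases hP : ∀ a, ∃ b, GEq k A B r (Function.update f i a) (Function.update g i b)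
          (insert i D)
      case neg
      · -- spoiler plays in A
        push_neg at hP
        obtain ⟨a, ha⟩ := hP
        choose Φ hΦ1 hΦ2 hΦ3 hΦ4 hΦ5 using fun b =>
          ih (Function.update f i a) (Function.update g i b) (insert i D) hD' (ha b)
        set l : List (Fml σ) := (Finset.univ : Finset B.carrier).toList.map Φ with hl
        have hlne : l ≠ [] := by
          simp [hl, Finset.toList_eq_nil]
          exact Finset.univ_nonempty.ne_empty
        refine ⟨.ex i (conj1 l), ?_, ?_, ?_, ?_, ?_⟩
        · intro j hj
          simp only [Fml.vars, Finset.mem_insert] at hj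
          rcases hj with rfl | hj
          · exact hi
          · obtain ⟨φ, hφ, hjφ⟩ := mem_vars_conj1 hlne j hj
            obtain ⟨b, _, rfl⟩ := List.mem_map.mp hφ
            exact hΦ1 b j hjφ
        · intro j hj
          simp only [Fml.freeVars, Finset.mem_erase] at hj
          obtain ⟨hji, hj⟩ := hj
          obtain ⟨φ, hφ, hjφ⟩ := mem_freeVars_conj1 hlne j hj
          obtain ⟨b, _, rfl⟩ := List.mem_map.mp hφ
          rcases Set.mem_insert_iff.mp (hΦ2 b j hjφ) with rfl | hjD
          · exact absurd rfl hji
          · exact hjD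
        · show (conj1 l).quant + 1 ≤ G n (r + 1)
          have hsum : (l.map Fml.quant).sum ≤ (l.map Fml.quant).length * G n r := by
            apply List.sum_le_card_nsmul
            intro x hx
            simp only [List.mem_map, hl] at hx
            obtain ⟨φ, ⟨b, -, rfl⟩, rfl⟩ := hx
            exact hΦ3 b
          have hlen : (l.map Fml.quant).length = n := by
            simp [hl, Finset.length_toList, hcB]
          rw [quant_conj1]
          rw [hlen] at hsum
          simp only [G]
          omega
        · refine ⟨a, (sat_conj1 hlne).mpr ?_⟩
          intro φ hφ
          obtain ⟨b, _, rfl⟩ := List.mem_map.mp hφ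
          exact hΦ4 b
        · rintro ⟨b, hb⟩
          have := (sat_conj1 hlne).mp hb (Φ b)
            (List.mem_map.mpr ⟨b, Finset.mem_toList.mpr (Finset.mem_univ b), rfl⟩)
          exact hΦ5 b this
      case pos
      · -- spoiler plays in B
        have h2 := h hP
        obtain ⟨b, hb⟩ := h2
        choose Φ hΦ1 hΦ2 hΦ3 hΦ4 hΦ5 using fun a =>
          ih (Function.update f i a) (Function.update g i b) (insert i D) hD' (hb a)
        set l : List (Fml σ) := (Finset.univ : Finset A.carrier).toList.map
          (fun a => Fml.not (Φ a)) with hl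
        have hlne : l ≠ [] := by
          simp [hl, Finset.toList_eq_nil]
          exact Finset.univ_nonempty.ne_empty
        refine ⟨.not (.ex i (conj1 l)), ?_, ?_, ?_, ?_, ?_⟩
        · intro j hj
          simp only [Fml.vars, Finset.mem_insert] at hj
          rcases hj with rfl | hj
          · exact hi
          · obtain ⟨φ, hφ, hjφ⟩ := mem_vars_conj1 hlne j hj
            obtain ⟨a, _, rfl⟩ := List.mem_map.mp hφ
            exact hΦ1 a j hjφ
        · intro j hj
          simp only [Fml.freeVars, Finset.mem_erase] at hj
          obtain ⟨hji, hj⟩ := hj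
          obtain ⟨φ, hφ, hjφ⟩ := mem_freeVars_conj1 hlne j hj
          obtain ⟨a, _, rfl⟩ := List.mem_map.mp hφ
          rcases Set.mem_insert_iff.mp (hΦ2 a j hjφ) with rfl | hjD
          · exact absurd rfl hji
          · exact hjD
        · show (conj1 l).quant + 1 ≤ G n (r + 1)
          have hsum : (l.map Fml.quant).sum ≤ (l.map Fml.quant).length * G n r := by
            apply List.sum_le_card_nsmul
            intro x hx
            simp only [List.mem_map, hl] at hx
            obtain ⟨φ, ⟨a, -, rfl⟩, rfl⟩ := hx
            exact hΦ3 a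
          have hlen : (l.map Fml.quant).length = n := by
            simp [hl, Finset.length_toList, hcA]
          rw [quant_conj1]
          rw [hlen] at hsum
          simp only [G]
          omega
        · rintro ⟨a, ha⟩
          have := (sat_conj1 hlne).mp ha (Fml.not (Φ a))
            (List.mem_map.mpr ⟨a, Finset.mem_toList.mpr (Finset.mem_univ a), rfl⟩)
          exact this (hΦ4 a)
        · intro hns
          refine hns ⟨b, (sat_conj1 hlne).mpr ?_⟩
          intro φ hφ
          obtain ⟨a, _, rfl⟩ := List.mem_map.mp hφ
          exact hΦ5 a

end Aux


/-- Lemma 5 of the paper. If two `n`-element structures (`n ≥ 2`) are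
distinguished by a sentence of `L^k` of quantifier depth `r`, then they are
distinguished by a sentence `φ` of `L^k` with `quant φ ≤ (n^r - 1)/(n - 1)`. -/
theorem statement_4 (σ : Signature) (k n r : ℕ) (hk : 1 ≤ k) (hn : 2 ≤ n)
    (A B : Struct σ) (hA : Nat.card A.carrier = n) (hB : Nat.card B.carrier = n)
    (h : ∃ φ : Fml σ, UsesVars k φ ∧ IsSentence φ ∧ φ.depth = r ∧
      Distinguishes A B φ) :
    ∃ φ : Fml σ, UsesVars k φ ∧ IsSentence φ ∧
      φ.quant ≤ (n ^ r - 1) / (n - 1) ∧ Distinguishes A B φ := by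
  classical
  obtain ⟨φ0, hu0, hs0, hd0, hA0, hB0⟩ := h
  have hfinA : Finite A.carrier := Nat.finite_of_card_ne_zero (by omega)
  have hfinB : Finite B.carrier := Nat.finite_of_card_ne_zero (by omega)
  haveI : Fintype A.carrier := Fintype.ofFinite _
  haveI : Fintype B.carrier := Fintype.ofFinite _
  have hcA : Fintype.card A.carrier = n := by rw [← Nat.card_eq_fintype_card, hA]
  have hcB : Fintype.card B.carrier = n := by rw [← Nat.card_eq_fintype_card, hB]
  haveI hAne : Nonempty A.carrier := by rw [← Fintype.card_pos_iff]; omega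
  haveI hBne : Nonempty B.carrier := by rw [← Fintype.card_pos_iff]; omega
  obtain ⟨g0, hg0⟩ : ∃ g0 : ℕ → B.carrier, ¬ Fml.Sat B g0 φ0 := by
    by_contra hc
    push_neg at hc
    exact hB0 hc
  set f0 : ℕ → A.carrier := fun _ => Classical.arbitrary _ with hf0
  have hnG : ¬ GEq k A B r f0 g0 (∅ : Set ℕ) := by
    intro hG
    have := GEq.sound φ0 r f0 g0 ∅ (le_of_eq hd0) hu0
      (by intro j hj; rw [hs0] at hj; exact absurd hj (Finset.notMem_empty j)) hG
    exact hg0 (this.mp (hA0 f0))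
  obtain ⟨φ, h1, h2, h3, h4, h5⟩ := GEq.complete hcA hcB hn r f0 g0 ∅
    (fun i hi => absurd hi (Set.notMem_empty i)) hnG
  have hsent : IsSentence φ := by
    rw [IsSentence, Finset.eq_empty_iff_forall_notMem]
    intro j hj
    exact h2 j hj
  refine ⟨φ, h1, hsent, ?_, ?_, ?_⟩
  · rw [← G_eq hn r]; exact h3
  · intro f
    exact (sat_congr φ f0 f (by
      intro j hj
      exact absurd (h2 j hj) (Set.notMem_empty j))).mp h4
  · intro hS
    exact h5 (hS g0)


end QVT
end

section
/- Let k ≥ 1, let n ≥ 2, and let 𝒜, ℬ be two n-element structures over a common finite relational signature. If some sentence of ∃⁺L^k distinguishes 𝒜 from ℬ, then some sentence φ of ∃⁺L^k with quant(φ) ≤ (n^{n^{2k−2}} − 1)/(n − 1) distinguishes 𝒜 from ℬ. -/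
namespace QVT

namespace EPG

open Function

variable {σ : Signature}

/-- A game position: a partial assignment of pebble pairs. -/
abbrev Pos (A B : Struct σ) (k : ℕ) : Type := Fin k → Option (A.carrier × B.carrier)

variable {A B : Struct σ} {k : ℕ}

/-- Atomic survival: the position is a partial homomorphism. -/
def S0 (p : Pos A B k) : Prop :=
  (∀ (i j : Fin k) (ab ab' : A.carrier × B.carrier),
      p i = some ab → p j = some ab' → ab.1 = ab'.1 → ab.2 = ab'.2) ∧
  (∀ (R : σ.symbols) (w : Fin (σ.arity R) → Fin k)
      (gf : Fin (σ.arity R) → A.carrier × B.carrier),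
      (∀ m, p (w m) = some (gf m)) →
      A.rel R (fun m => (gf m).1) → B.rel R (fun m => (gf m).2))

/-- Duplicator survives `m` rounds of the existential `k`-pebble game. -/
def S : ℕ → Pos A B k → Prop
  | 0, p => S0 p
  | (m+1), p => S0 p ∧ ∀ (i : Fin k) (a : A.carrier), ∃ b : B.carrier,
      S m (Function.update p i (some (a, b)))

lemma S_succ_iff {m : ℕ} {p : Pos A B k} : S (m+1) p ↔ (S0 p ∧ ∀ (i : Fin k) (a : A.carrier),
    ∃ b : B.carrier, S m (Function.update p i (some (a, b)))) := Iff.rfl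

lemma S_S0 {m : ℕ} {p : Pos A B k} (h : S m p) : S0 p := by
  cases m with
  | zero => exact h
  | succ m => exact h.1

/-- `q` is dominated by `p`: every pebble of `q` carries a pair carried in `p`. -/
def Dom (p q : Pos A B k) : Prop :=
  ∃ τ : Fin k → Fin k, ∀ l, q l = none ∨ q l = p (τ l)

lemma S0_dom {p q : Pos A B k} (h : S0 p) (hd : Dom p q) : S0 q := by
  obtain ⟨τ, hτ⟩ := hd
  constructor
  · intro i j ab ab' hi hj h1
    rcases hτ i with hni | hpi
    · rw [hi] at hni; exact absurd hni (by simp)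
    rcases hτ j with hnj | hpj
    · rw [hj] at hnj; exact absurd hnj (by simp)
    exact h.1 (τ i) (τ j) ab ab' (by rw [← hpi, hi]) (by rw [← hpj, hj]) h1
  · intro R w gf hw
    refine h.2 R (fun m => τ (w m)) gf (fun m => ?_)
    rcases hτ (w m) with hn | hp
    · rw [hw m] at hn; exact absurd hn (by simp)
    · rw [← hp, hw m]

/-- Master monotonicity: Duplicator survival transfers to dominated positions. -/
lemma S_dom {m : ℕ} : ∀ {p q : Pos A B k}, S m p → Dom p q → S m q := by
  induction m with
  | zero => exact fun h hd => S0_dom h hd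
  | succ m ih =>
    intro p q h hd
    obtain ⟨τ, hτ⟩ := hd
    refine ⟨S0_dom h.1 ⟨τ, hτ⟩, ?_⟩
    intro i a
    -- choose a fresh slot on the `p` side
    have hcard : ((Finset.univ.erase i).image τ).card < k := by
      calc ((Finset.univ.erase i).image τ).card ≤ (Finset.univ.erase i).card :=
            Finset.card_image_le
        _ < Finset.univ.card := Finset.card_erase_lt_of_mem (Finset.mem_univ i)
        _ = k := by simp
    have hex : ∃ j₀ : Fin k, j₀ ∉ (Finset.univ.erase i).image τ := by
      by_contra hc
      push_neg at hc
      have : (Finset.univ : Finset (Fin k)) ⊆ (Finset.univ.erase i).image τ :=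
        fun x _ => hc x
      have h2 := Finset.card_le_card this
      simp only [Finset.card_univ, Fintype.card_fin] at h2
      omega
    obtain ⟨j₀, hj₀⟩ := hex
    obtain ⟨b, hb⟩ := h.2 j₀ a
    refine ⟨b, ih hb ⟨Function.update τ i j₀, ?_⟩⟩
    intro l
    by_cases hl : l = i
    · subst hl
      right
      rw [Function.update_self, Function.update_self, Function.update_self]
    · have hne : τ l ≠ j₀ := fun hτl =>
        hj₀ (hτl ▸ Finset.mem_image_of_mem τ (Finset.mem_erase.2 ⟨hl, Finset.mem_univ l⟩))
      rw [Function.update_of_ne hl, Function.update_of_ne hl, Function.update_of_ne hne]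
      exact hτ l

lemma S_anti {m : ℕ} : ∀ {p : Pos A B k}, S (m+1) p → S m p := by
  induction m with
  | zero => exact fun h => h.1
  | succ m ih =>
    intro p h
    exact ⟨h.1, fun i a => (h.2 i a).imp (fun b hb => ih hb)⟩

lemma S_add {m' : ℕ} : ∀ (d : ℕ) {p : Pos A B k}, S (m' + d) p → S m' p := by
  intro d
  induction d with
  | zero => exact fun h => h
  | succ d ih => exact fun h => ih (S_anti (by rwa [Nat.add_succ] at h))

lemma S_le {m m' : ℕ} (hm : m' ≤ m) {p : Pos A B k} (h : S m p) : S m' p := by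
  obtain ⟨d, rfl⟩ := Nat.exists_eq_add_of_le hm
  exact S_add d h



section Sound

lemma sound (φ : Fml σ) : φ.ExPos → UsesVars k φ →
    ∀ (p : Pos A B k) (f : ℕ → A.carrier) (g : ℕ → B.carrier),
    S φ.quant p →
    (∀ i ∈ φ.freeVars, ∃ (h : i < k) (ab : A.carrier × B.carrier), p ⟨i, h⟩ = some ab) →
    (∀ (i : Fin k) (ab : A.carrier × B.carrier), p i = some ab → f i = ab.1) →
    (∀ (i : Fin k) (ab : A.carrier × B.carrier), p i = some ab → g i = ab.2) →
    Fml.Sat A f φ → Fml.Sat B g φ := by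
  induction φ with
  | eq i j =>
    intro _ _ p f g hS hfree hf hg hsat
    obtain ⟨hik, abi, hpi⟩ := hfree i (by simp [Fml.freeVars])
    obtain ⟨hjk, abj, hpj⟩ := hfree j (by simp [Fml.freeVars])
    have h2 := (S_S0 hS).1 _ _ _ _ hpi hpj
      (by rw [← hf _ _ hpi, ← hf _ _ hpj]; exact hsat)
    show g i = g j
    rw [hg _ _ hpi, hg _ _ hpj, h2]
  | rel R v =>
    intro _ _ p f g hS hfree hf hg hsat
    have hmem : ∀ m, v m ∈ (Fml.rel R v).freeVars := by
      intro m; simp [Fml.freeVars]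
    choose hlt ab hab using fun m => hfree (v m) (hmem m)
    have hA : (fun m => f (v m)) = fun m => (ab m).1 := by
      funext m; exact hf _ _ (hab m)
    have hB : (fun m => g (v m)) = fun m => (ab m).2 := by
      funext m; exact hg _ _ (hab m)
    show B.rel R fun m => g (v m)
    rw [hB]
    exact (S_S0 hS).2 R (fun m => ⟨v m, hlt m⟩) ab hab (by rw [← hA]; exact hsat)
  | @and φ ψ ihφ ihψ =>
    intro hE hU p f g hS hfree hf hg hsat
    have hq : Fml.quant (.and φ ψ) = φ.quant + ψ.quant := rfl
    refine ⟨ihφ hE.1 (fun i hi => hU i (by simp [Fml.vars]; exact Or.inl hi)) p f g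
        (S_le (by rw [hq]; omega) hS)
        (fun i hi => hfree i (by simp [Fml.freeVars]; exact Or.inl hi)) hf hg hsat.1,
      ihψ hE.2 (fun i hi => hU i (by simp [Fml.vars]; exact Or.inr hi)) p f g
        (S_le (by rw [hq]; omega) hS)
        (fun i hi => hfree i (by simp [Fml.freeVars]; exact Or.inr hi)) hf hg hsat.2⟩
  | @or φ ψ ihφ ihψ =>
    intro hE hU p f g hS hfree hf hg hsat
    have hq : Fml.quant (.or φ ψ) = φ.quant + ψ.quant := rfl
    rcases hsat with hsat | hsat
    · exact Or.inl (ihφ hE.1 (fun i hi => hU i (by simp [Fml.vars]; exact Or.inl hi)) p f g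
        (S_le (by rw [hq]; omega) hS)
        (fun i hi => hfree i (by simp [Fml.freeVars]; exact Or.inl hi)) hf hg hsat)
    · exact Or.inr (ihψ hE.2 (fun i hi => hU i (by simp [Fml.vars]; exact Or.inr hi)) p f g
        (S_le (by rw [hq]; omega) hS)
        (fun i hi => hfree i (by simp [Fml.freeVars]; exact Or.inr hi)) hf hg hsat)
  | @ex i φ ih =>
    intro hE hU p f g hS hfree hf hg hsat
    obtain ⟨a, ha⟩ := hsat
    have hik : i < k := hU i (by simp [Fml.vars])
    obtain ⟨b, hb⟩ := hS.2 ⟨i, hik⟩ a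
    refine ⟨b, ih hE (fun j hj => hU j (by simp [Fml.vars]; exact Or.inr hj))
      (Function.update p ⟨i, hik⟩ (some (a, b))) (Function.update f i a)
      (Function.update g i b) hb ?_ ?_ ?_ ha⟩
    · intro j hj
      by_cases hji : j = i
      · subst hji
        exact ⟨hik, (a, b), by rw [Function.update_self]⟩
      · obtain ⟨hjk, ab, hab⟩ := hfree j (by simp [Fml.freeVars]; exact ⟨hji, hj⟩)
        refine ⟨hjk, ab, ?_⟩
        rw [Function.update_of_ne (by simp [Fin.ext_iff]; omega), hab]
    · intro l ab hab
      by_cases hl : l = ⟨i, hik⟩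
      · subst hl
        rw [Function.update_self] at hab
        cases hab
        show Function.update f i a i = a
        rw [Function.update_self]
      · rw [Function.update_of_ne hl] at hab
        have : (l : ℕ) ≠ i := by
          intro hli
          exact hl (by simp [Fin.ext_iff, hli])
        rw [Function.update_of_ne this]
        exact hf _ _ hab
    · intro l ab hab
      by_cases hl : l = ⟨i, hik⟩
      · subst hl
        rw [Function.update_self] at hab
        cases hab
        show Function.update g i b i = b
        rw [Function.update_self]
      · rw [Function.update_of_ne hl] at hab
        have : (l : ℕ) ≠ i := by
          intro hli
          exact hl (by simp [Fin.ext_iff, hli])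
        rw [Function.update_of_ne this]
        exact hg _ _ hab
  | not φ ih => exact fun hE => hE.elim
  | all i φ ih => exact fun hE => hE.elim

end Sound

section Construct

/-- Finite conjunction (nonempty-safe). -/
def bigAnd : List (Fml σ) → Fml σ
  | [] => .eq 0 0
  | [ψ] => ψ
  | ψ :: χ :: l => .and ψ (bigAnd (χ :: l))

lemma bigAnd_quant : ∀ l : List (Fml σ), (bigAnd l).quant = (l.map Fml.quant).sum
  | [] => rfl
  | [ψ] => by simp [bigAnd]
  | ψ :: χ :: l => by
      simp only [bigAnd, List.map_cons, List.sum_cons]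
      show ψ.quant + (bigAnd (χ :: l)).quant = _
      rw [bigAnd_quant (χ :: l)]
      simp

lemma bigAnd_expos : ∀ l : List (Fml σ), (∀ ψ ∈ l, ψ.ExPos) → (bigAnd l).ExPos
  | [] => fun _ => trivial
  | [ψ] => fun h => h ψ (by simp)
  | ψ :: χ :: l => fun h =>
      ⟨h ψ (by simp), bigAnd_expos (χ :: l) (fun χ' hχ' => h χ' (List.mem_cons_of_mem _ hχ'))⟩

lemma bigAnd_vars : ∀ (l : List (Fml σ)) (j : ℕ), j ∈ (bigAnd l).vars →
    (∃ ψ ∈ l, j ∈ ψ.vars) ∨ j = 0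
  | [], j => fun h => Or.inr (by simpa [bigAnd, Fml.vars] using h)
  | [ψ], j => fun h => Or.inl ⟨ψ, by simp, h⟩
  | ψ :: χ :: l, j => fun h => by
      rcases Finset.mem_union.1 h with h | h
      · exact Or.inl ⟨ψ, by simp, h⟩
      · rcases bigAnd_vars (χ :: l) j h with ⟨ψ', h1, h2⟩ | h
        · exact Or.inl ⟨ψ', List.mem_cons_of_mem _ h1, h2⟩
        · exact Or.inr h

lemma bigAnd_freeVars : ∀ (l : List (Fml σ)) (j : ℕ), l ≠ [] → j ∈ (bigAnd l).freeVars →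
    ∃ ψ ∈ l, j ∈ ψ.freeVars
  | [], j => fun h => absurd rfl h
  | [ψ], j => fun _ h => ⟨ψ, by simp, h⟩
  | ψ :: χ :: l, j => fun _ h => by
      rcases Finset.mem_union.1 h with h | h
      · exact ⟨ψ, by simp, h⟩
      · obtain ⟨ψ', h1, h2⟩ := bigAnd_freeVars (χ :: l) j (by simp) h
        exact ⟨ψ', List.mem_cons_of_mem _ h1, h2⟩

lemma bigAnd_sat (M : Struct σ) (f : ℕ → M.carrier) :
    ∀ l : List (Fml σ), l ≠ [] → (Fml.Sat M f (bigAnd l) ↔ ∀ ψ ∈ l, Fml.Sat M f ψ)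
  | [] => fun h => absurd rfl h
  | [ψ] => fun _ => by simp [bigAnd]
  | ψ :: χ :: l => fun _ => by
      have := bigAnd_sat M f (χ :: l) (by simp)
      show Fml.Sat M f ψ ∧ Fml.Sat M f (bigAnd (χ :: l)) ↔ _
      rw [this]
      simp

lemma gsum_succ (N m : ℕ) :
    ∑ t ∈ Finset.range (m+1), N ^ t = N * (∑ t ∈ Finset.range m, N ^ t) + 1 := by
  induction m with
  | zero => simp
  | succ m ih =>
    calc ∑ t ∈ Finset.range (m+1+1), N^t
        = (∑ t ∈ Finset.range (m+1), N^t) + N^(m+1) := Finset.sum_range_succ _ _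
      _ = (N * ∑ t ∈ Finset.range m, N^t + 1) + N^m*N := by rw [ih, pow_succ]
      _ = N * ((∑ t ∈ Finset.range m, N^t) + N^m) + 1 := by ring
      _ = N * (∑ t ∈ Finset.range (m+1), N^t) + 1 := by rw [Finset.sum_range_succ]

lemma gsum_div (n m : ℕ) (hn : 2 ≤ n) :
    ∑ t ∈ Finset.range m, n ^ t = (n ^ m - 1) / (n - 1) := by
  obtain ⟨c, rfl⟩ : ∃ c, n = c + 1 := ⟨n - 1, by omega⟩
  have hc : 1 ≤ c := by omega
  have key : ∀ m : ℕ, (∑ t ∈ Finset.range m, (c+1) ^ t) * c + 1 = (c+1) ^ m := by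
    intro m
    induction m with
    | zero => simp
    | succ m ih =>
      rw [gsum_succ, pow_succ, ← ih]
      ring
  have h1 : (c+1) ^ m - 1 = (∑ t ∈ Finset.range m, (c+1) ^ t) * c := by
    have := key m
    omega
  rw [h1, show c + 1 - 1 = c from rfl, Nat.mul_div_cancel _ (by omega)]

lemma extend_fst {p : Pos A B k} {f : ℕ → A.carrier}
    (hf : ∀ (i : Fin k) (ab : A.carrier × B.carrier), p i = some ab → f i = ab.1)
    (i0 : Fin k) (a : A.carrier) (b : B.carrier) :
    ∀ (j : Fin k) (ab : A.carrier × B.carrier),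
      Function.update p i0 (some (a, b)) j = some ab → Function.update f (i0 : ℕ) a j = ab.1 := by
  intro j ab hab
  by_cases hj : j = i0
  · subst hj
    rw [Function.update_self] at hab
    cases hab
    show Function.update f (j : ℕ) a j = a
    rw [Function.update_self]
  · rw [Function.update_of_ne hj] at hab
    rw [Function.update_of_ne (by simp [Fin.ext_iff] at hj ⊢; omega)]
    exact hf _ _ hab

lemma extend_snd {p : Pos A B k} {g : ℕ → B.carrier}
    (hg : ∀ (i : Fin k) (ab : A.carrier × B.carrier), p i = some ab → g i = ab.2)
    (i0 : Fin k) (a : A.carrier) (b : B.carrier) :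
    ∀ (j : Fin k) (ab : A.carrier × B.carrier),
      Function.update p i0 (some (a, b)) j = some ab → Function.update g (i0 : ℕ) b j = ab.2 := by
  intro j ab hab
  by_cases hj : j = i0
  · subst hj
    rw [Function.update_self] at hab
    cases hab
    show Function.update g (j : ℕ) b j = b
    rw [Function.update_self]
  · rw [Function.update_of_ne hj] at hab
    rw [Function.update_of_ne (by simp [Fin.ext_iff] at hj ⊢; omega)]
    exact hg _ _ hab

lemma construct0 {p : Pos A B k} (h : ¬ S0 p) :
    ∃ φ : Fml σ, φ.ExPos ∧ UsesVars k φ ∧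
      (∀ i ∈ φ.freeVars, ∃ (hi : i < k), p ⟨i, hi⟩ ≠ none) ∧
      φ.quant = 0 ∧
      (∀ f : ℕ → A.carrier, (∀ (i : Fin k) ab, p i = some ab → f i = ab.1) → Fml.Sat A f φ) ∧
      (∀ g : ℕ → B.carrier, (∀ (i : Fin k) ab, p i = some ab → g i = ab.2) → ¬ Fml.Sat B g φ) := by
  rw [S0, not_and_or] at h
  rcases h with h | h
  · push_neg at h
    obtain ⟨i, j, ab, ab', hpi, hpj, h1, h2⟩ := h
    refine ⟨.eq i j, trivial, ?_, ?_, rfl, ?_, ?_⟩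
    · intro l hl
      simp [Fml.vars] at hl
      rcases hl with rfl | rfl
      · exact i.isLt
      · exact j.isLt
    · intro l hl
      simp [Fml.freeVars] at hl
      rcases hl with rfl | rfl
      · exact ⟨i.isLt, by rw [show (⟨(i:ℕ), i.isLt⟩ : Fin k) = i from rfl, hpi]; simp⟩
      · exact ⟨j.isLt, by rw [show (⟨(j:ℕ), j.isLt⟩ : Fin k) = j from rfl, hpj]; simp⟩
    · intro f hf
      show f i = f j
      rw [hf _ _ hpi, hf _ _ hpj, h1]
    · intro g hg hsat
      have : g i = g j := hsat
      rw [hg _ _ hpi, hg _ _ hpj] at this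
      exact h2 this
  · push_neg at h
    obtain ⟨R, w, gf, hw, hA, hB⟩ := h
    refine ⟨.rel R (fun m => (w m : ℕ)), trivial, ?_, ?_, rfl, ?_, ?_⟩
    · intro l hl
      simp [Fml.vars] at hl
      obtain ⟨m, rfl⟩ := hl
      exact (w m).isLt
    · intro l hl
      simp [Fml.freeVars] at hl
      obtain ⟨m, rfl⟩ := hl
      exact ⟨(w m).isLt, by rw [show (⟨((w m):ℕ), (w m).isLt⟩ : Fin k) = w m from rfl, hw m]; simp⟩
    · intro f hf
      show A.rel R fun m => f (w m)
      have : (fun m => f (w m)) = fun m => (gf m).1 := funext fun m => hf _ _ (hw m)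
      rw [this]
      exact hA
    · intro g hg hsat
      have hs : B.rel R fun m => g (w m) := hsat
      have : (fun m => g (w m)) = fun m => (gf m).2 := funext fun m => hg _ _ (hw m)
      rw [this] at hs
      exact hB hs

lemma construct [Fintype B.carrier] [Nonempty B.carrier] (hk : 1 ≤ k) :
    ∀ (m : ℕ) (p : Pos A B k), ¬ S m p →
    ∃ φ : Fml σ, φ.ExPos ∧ UsesVars k φ ∧
      (∀ i ∈ φ.freeVars, ∃ (hi : i < k), p ⟨i, hi⟩ ≠ none) ∧
      φ.quant ≤ ∑ t ∈ Finset.range m, (Fintype.card B.carrier) ^ t ∧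
      (∀ f : ℕ → A.carrier, (∀ (i : Fin k) ab, p i = some ab → f i = ab.1) → Fml.Sat A f φ) ∧
      (∀ g : ℕ → B.carrier, (∀ (i : Fin k) ab, p i = some ab → g i = ab.2) → ¬ Fml.Sat B g φ) := by
  intro m
  induction m with
  | zero =>
    intro p h
    obtain ⟨φ, h1, h2, h3, h4, h5, h6⟩ := construct0 h
    exact ⟨φ, h1, h2, h3, by omega, h5, h6⟩
  | succ m ih =>
    intro p h
    by_cases hS0 : S0 p
    · have hmove : ∃ (i : Fin k) (a : A.carrier), ∀ b : B.carrier,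
          ¬ S m (Function.update p i (some (a, b))) := by
        by_contra hc
        push_neg at hc
        exact h ⟨hS0, fun i a => hc i a⟩
      obtain ⟨i, a, hall⟩ := hmove
      choose Ψ hE hU hfree hq hsatA hsatB using fun b : B.carrier => ih _ (hall b)
      set l : List (Fml σ) := (Finset.univ : Finset B.carrier).toList.map Ψ with hl
      have hlne : l ≠ [] := by
        simp [hl, Finset.toList_eq_nil]
        exact Finset.univ_nonempty.ne_empty
      have hmem : ∀ b : B.carrier, Ψ b ∈ l :=
        fun b => List.mem_map_of_mem (f := Ψ) (Finset.mem_toList.2 (Finset.mem_univ b))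
      have hmem' : ∀ ψ ∈ l, ∃ b, ψ = Ψ b := by
        intro ψ hψ
        obtain ⟨b, _, rfl⟩ := List.mem_map.1 hψ
        exact ⟨b, rfl⟩
      refine ⟨.ex (i : ℕ) (bigAnd l), ?_, ?_, ?_, ?_, ?_, ?_⟩
      · exact bigAnd_expos l (fun ψ hψ => by obtain ⟨b, rfl⟩ := hmem' ψ hψ; exact hE b)
      · intro j hj
        simp only [Fml.vars, Finset.mem_insert] at hj
        rcases hj with rfl | hj
        · exact i.isLt
        · rcases bigAnd_vars l j hj with ⟨ψ, hψ, hjψ⟩ | rfl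
          · obtain ⟨b, rfl⟩ := hmem' ψ hψ
            exact hU b j hjψ
          · omega
      · intro j hj
        simp only [Fml.freeVars, Finset.mem_erase] at hj
        obtain ⟨hji, hj⟩ := hj
        obtain ⟨ψ, hψ, hjψ⟩ := bigAnd_freeVars l j hlne hj
        obtain ⟨b, rfl⟩ := hmem' ψ hψ
        obtain ⟨hjk, hne⟩ := hfree b j hjψ
        refine ⟨hjk, ?_⟩
        rwa [Function.update_of_ne (by simp [Fin.ext_iff]; omega)] at hne
      · show (bigAnd l).quant + 1 ≤ _
        rw [bigAnd_quant l, gsum_succ]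
        have h2 : (l.map Fml.quant).sum ≤ (l.map Fml.quant).length •
            (∑ t ∈ Finset.range m, (Fintype.card B.carrier) ^ t) := by
          apply List.sum_le_card_nsmul
          intro x hx
          obtain ⟨ψ, hψ, rfl⟩ := List.mem_map.1 hx
          obtain ⟨b, rfl⟩ := hmem' ψ hψ
          exact hq b
        have h3 : (l.map Fml.quant).length = Fintype.card B.carrier := by
          simp [hl, Finset.length_toList]
        rw [smul_eq_mul, h3] at h2
        omega
      · intro f hf
        exact ⟨a, (bigAnd_sat A _ l hlne).2 (fun ψ hψ => by
          obtain ⟨b, rfl⟩ := hmem' ψ hψ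
          exact hsatA b _ (extend_fst hf i a b))⟩
      · intro g hg hsat
        obtain ⟨b', hb'⟩ := hsat
        have := (bigAnd_sat B _ l hlne).1 hb' (Ψ b') (hmem b')
        exact hsatB b' _ (extend_snd hg i a b') this
    · obtain ⟨φ, h1, h2, h3, h4, h5, h6⟩ := construct0 hS0
      exact ⟨φ, h1, h2, h3, by omega, h5, h6⟩

end Construct

section Core

def emptyPos (A B : Struct σ) (k : ℕ) : Pos A B k := fun _ => none

lemma dom_pointwise {k : ℕ} (hk : 0 < k) {p q : Pos A B k}
    (h : ∀ l, q l = none ∨ ∃ l', q l = p l') : Dom p q := by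
  have : ∀ l : Fin k, ∃ l' : Fin k, q l = none ∨ q l = p l' := by
    intro l
    rcases h l with hn | ⟨l', hl'⟩
    · exact ⟨⟨0, hk⟩, Or.inl hn⟩
    · exact ⟨l', Or.inr hl'⟩
  choose τ hτ using this
  exact ⟨τ, hτ⟩

variable {K : ℕ}

def ctxPos (x : Fin K → A.carrier × B.carrier) : Pos A B (K+1) :=
  fun l => if h : (l : ℕ) < K then some (x ⟨l, h⟩) else none

def Qx (m : ℕ) (x : Fin K → A.carrier × B.carrier) : Prop :=
  ∀ a : A.carrier, ∃ b : B.carrier,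
    S m (Function.update (ctxPos x) (Fin.last K) (some (a, b)))

def rho (x : Fin K → A.carrier × B.carrier) (m : ℕ) : Prop :=
  ¬ Qx m x ∧ ∀ j < m, Qx j x

lemma rho_func {x : Fin K → A.carrier × B.carrier} {m m' : ℕ}
    (h : rho x m) (h' : rho x m') : m = m' := by
  rcases lt_trichotomy m m' with hlt | he | hlt
  · exact absurd (h'.2 m hlt) h.1
  · exact he
  · exact absurd (h.2 m' hlt) h'.1

/-- From a nonempty position where Spoiler wins in `m+1` rounds but not `m`,
extract a normalized full context of rho-value exactly `m`, carrying only pairs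
pebbled in `p`. -/
lemma realize (hK : 1 ≤ K) {m : ℕ} {p : Pos A B (K+1)}
    (hne : ∃ s ab, p s = some ab) (hS : S m p) (hnS : ¬ S (m+1) p) :
    ∃ x : Fin K → A.carrier × B.carrier, rho x m ∧ ∀ t, ∃ s, p s = some (x t) := by
  have hS0 : S0 p := S_S0 hS
  have hmv : ∃ (i : Fin (K+1)) (a : A.carrier), ∀ b,
      ¬ S m (Function.update p i (some (a, b))) := by
    by_contra hc
    push_neg at hc
    exact hnS ⟨hS0, fun i a => hc i a⟩
  obtain ⟨i₁, a, hwin₁⟩ := hmv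
  have hmv2 : ∃ (i : Fin (K+1)) (a : A.carrier) (s₀ : Fin (K+1))
      (ab₀ : A.carrier × B.carrier), s₀ ≠ i ∧ p s₀ = some ab₀ ∧
      ∀ b, ¬ S m (Function.update p i (some (a, b))) := by
    by_cases hfree : ∃ j, p j = none
    · obtain ⟨j, hj⟩ := hfree
      obtain ⟨s, ab, hs⟩ := hne
      have hsj : s ≠ j := fun h => by rw [h, hj] at hs; cases hs
      refine ⟨j, a, s, ab, hsj, hs, ?_⟩
      intro b hb
      refine hwin₁ b (S_dom hb ?_)
      apply dom_pointwise (by omega)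
      intro l
      by_cases hl : l = i₁
      · subst hl
        right
        exact ⟨j, by rw [Function.update_self, Function.update_self]⟩
      · rw [Function.update_of_ne hl]
        by_cases hlj : l = j
        · subst hlj; exact Or.inl hj
        · exact Or.inr ⟨l, by rw [Function.update_of_ne hlj]⟩
    · push_neg at hfree
      have hs₀ : ∃ s₀ : Fin (K+1), s₀ ≠ i₁ := by
        by_cases h0 : i₁ = ⟨0, by omega⟩
        · exact ⟨⟨1, by omega⟩, by rw [h0]; simp [Fin.ext_iff]⟩
        · exact ⟨⟨0, by omega⟩, fun h => h0 (h ▸ rfl)⟩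
      obtain ⟨s₀, hs₀i⟩ := hs₀
      obtain ⟨ab₀, hab₀⟩ := Option.ne_none_iff_exists'.1 (hfree s₀)
      exact ⟨i₁, a, s₀, ab₀, hs₀i, hab₀, hwin₁⟩
  obtain ⟨i, a, s₀, ab₀, hs₀i, hs₀, hwin⟩ := hmv2
  set x : Fin K → A.carrier × B.carrier := fun t => (p (i.succAbove t)).getD ab₀ with hx
  have domA : ∀ v : Option (A.carrier × B.carrier), Dom (Function.update p i v)
      (Function.update (ctxPos x) (Fin.last K) v) := by
    intro v
    apply dom_pointwise (by omega)
    intro l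
    by_cases hl : l = Fin.last K
    · subst hl
      right
      exact ⟨i, by rw [Function.update_self, Function.update_self]⟩
    · rw [Function.update_of_ne hl]
      have hlK : (l : ℕ) < K := by
        have h1 := l.isLt
        have h2 : (l : ℕ) ≠ K := fun h => hl (Fin.ext h)
        omega
      have hctx : ctxPos x l = some (x ⟨(l : ℕ), hlK⟩) := dif_pos hlK
      rw [hctx]
      right
      cases hpl : p (i.succAbove ⟨(l : ℕ), hlK⟩) with
      | none =>
        refine ⟨s₀, ?_⟩
        rw [Function.update_of_ne hs₀i, hs₀, hx]
        simp [hpl]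
      | some w =>
        refine ⟨i.succAbove ⟨(l : ℕ), hlK⟩, ?_⟩
        rw [Function.update_of_ne (Fin.succAbove_ne i _), hpl, hx]
        simp [hpl]
  have domB : ∀ v : Option (A.carrier × B.carrier),
      Dom (Function.update (ctxPos x) (Fin.last K) v) (Function.update p i v) := by
    intro v
    apply dom_pointwise (by omega)
    intro l
    by_cases hl : l = i
    · subst hl
      right
      exact ⟨Fin.last K, by rw [Function.update_self, Function.update_self]⟩
    · rw [Function.update_of_ne hl]
      cases hpl : p l with
      | none => exact Or.inl rfl
      | some w =>
        obtain ⟨t, ht⟩ := Fin.exists_succAbove_eq hl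
        right
        refine ⟨t.castSucc, ?_⟩
        rw [Function.update_of_ne (Fin.ne_of_lt (Fin.castSucc_lt_last t))]
        have h1 : ctxPos x t.castSucc = some (x ⟨((t.castSucc : Fin (K+1)) : ℕ), t.isLt⟩) :=
          dif_pos t.isLt
        rw [h1, hx]
        have h2 : (⟨((t.castSucc : Fin (K+1)) : ℕ), t.isLt⟩ : Fin K) = t := by
          simp [Fin.ext_iff]
        rw [h2]
        simp [ht, hpl]
  refine ⟨x, ⟨?_, ?_⟩, ?_⟩
  · intro hQ
    obtain ⟨b, hb⟩ := hQ a
    exact hwin b (S_dom hb (domB (some (a, b))))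
  · intro j hj a'
    have hS' : S (j+1) p := S_le (by omega) hS
    obtain ⟨b, hb⟩ := hS'.2 i a'
    exact ⟨b, S_dom hb (domA (some (a', b)))⟩
  · intro t
    cases hpt : p (i.succAbove t) with
    | none => exact ⟨s₀, by rw [hs₀, hx]; simp [hpt]⟩
    | some w => exact ⟨i.succAbove t, by rw [hpt, hx]; simp [hpt]⟩

lemma descend {m : ℕ} {p : Pos A B (K+1)} (hS : S (m+1) p) (hnS : ¬ S (m+2) p) :
    ∃ p' : Pos A B (K+1), (∃ s ab, p' s = some ab) ∧ S m p' ∧ ¬ S (m+1) p' := by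
  have hmv : ∃ (i : Fin (K+1)) (a : A.carrier), ∀ b,
      ¬ S (m+1) (Function.update p i (some (a, b))) := by
    by_contra hc
    push_neg at hc
    exact hnS ⟨hS.1, fun i a => hc i a⟩
  obtain ⟨i, a, hwin⟩ := hmv
  obtain ⟨b, hb⟩ := hS.2 i a
  exact ⟨Function.update p i (some (a, b)),
    ⟨i, (a, b), Function.update_self _ _ _⟩, hb, hwin b⟩

lemma ranks (hK : 1 ≤ K) : ∀ m : ℕ,
    (∃ p : Pos A B (K+1), (∃ s ab, p s = some ab) ∧ S m p ∧ ¬ S (m+1) p) →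
    ∀ v ≤ m, ∃ x : Fin K → A.carrier × B.carrier, rho x v := by
  intro m
  induction m with
  | zero =>
    rintro ⟨p, hne, hS, hnS⟩ v hv
    interval_cases v
    obtain ⟨x, hx, _⟩ := realize hK hne hS hnS
    exact ⟨x, hx⟩
  | succ m ih =>
    rintro ⟨p, hne, hS, hnS⟩ v hv
    rcases Nat.lt_or_ge v (m+1) with hv' | hv'
    · obtain ⟨p', hne', hS', hnS'⟩ := descend hS hnS
      exact ih ⟨p', hne', hS', hnS'⟩ v (by omega)
    · have : v = m + 1 := by omega
      subst this
      obtain ⟨x, hx, _⟩ := realize hK hne hS hnS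
      exact ⟨x, hx⟩

variable [Fintype A.carrier] [Fintype B.carrier]

lemma rank_le (hK : 1 ≤ K) {m : ℕ} {p : Pos A B (K+1)}
    (hne : ∃ s ab, p s = some ab) (hS : S m p) (hnS : ¬ S (m+1) p) :
    m + 1 ≤ Fintype.card (Fin K → A.carrier × B.carrier) := by
  classical
  have h := ranks hK m ⟨p, hne, hS, hnS⟩
  choose X hX using h
  let F : Fin (m+1) → (Fin K → A.carrier × B.carrier) :=
    fun v => X (v : ℕ) (by omega)
  have hinj : Function.Injective F := by
    intro u v huv
    have h1 : rho (F u) (u : ℕ) := hX _ _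
    have h2 : rho (F v) (v : ℕ) := hX _ _
    rw [huv] at h1
    exact Fin.ext (rho_func h1 h2)
  have := Fintype.card_le_of_injective F hinj
  simpa using this

lemma stable (hK : 1 ≤ K) {p : Pos A B (K+1)} (hne : ∃ s ab, p s = some ab)
    (hSD : S (Fintype.card (Fin K → A.carrier × B.carrier)) p) : ∀ m, S m p := by
  intro m
  induction m using Nat.strong_induction_on with
  | _ m ih =>
    by_cases hm : m ≤ Fintype.card (Fin K → A.carrier × B.carrier)
    · exact S_le hm hSD
    · push_neg at hm
      cases m with
      | zero => omega
      | succ m' =>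
        have hSm' : S m' p := ih m' (by omega)
        by_contra hn
        have := rank_le hK hne hSm' hn
        omega

lemma notS_D (hK : 1 ≤ K) {p : Pos A B (K+1)} (hne : ∃ s ab, p s = some ab)
    {q : ℕ} (hq : ¬ S q p) : ¬ S (Fintype.card (Fin K → A.carrier × B.carrier)) p :=
  fun hSD => hq (stable hK hne hSD q)

end Core

section Empty

variable {K : ℕ} [Fintype A.carrier] [Fintype B.carrier]

lemma empty_core (hK : 1 ≤ K) (hA2 : 2 ≤ Fintype.card A.carrier)
    (hB1 : 1 ≤ Fintype.card B.carrier) {q : ℕ}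
    (hq : ¬ S q (emptyPos A B (K+1))) :
    ¬ S (Fintype.card (Fin K → A.carrier × B.carrier)) (emptyPos A B (K+1)) := by
  classical
  haveI hAne : Nonempty A.carrier := Fintype.card_pos_iff.1 (by omega)
  haveI hBne : Nonempty B.carrier := Fintype.card_pos_iff.1 (by omega)
  set D := Fintype.card (Fin K → A.carrier × B.carrier) with hD
  have hD1 : 1 ≤ D := Fintype.card_pos
  by_cases h0 : S0 (emptyPos A B (K+1))
  swap
  · exact fun hS => h0 (S_S0 hS)
  intro hSD
  cases q with
  | zero => exact hq h0
  | succ q' =>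
  have hq' : ∃ (i : Fin (K+1)) (a : A.carrier), ∀ b,
      ¬ S q' (Function.update (emptyPos A B (K+1)) i (some (a, b))) := by
    by_contra hc
    push_neg at hc
    exact hq ⟨h0, fun i a => hc i a⟩
  obtain ⟨i₀, astar, hwinq⟩ := hq'
  have hsing_ne : ∀ (i : Fin (K+1)) (ab : A.carrier × B.carrier),
      ∃ s ab', Function.update (emptyPos A B (K+1)) i (some ab) s = some ab' :=
    fun i ab => ⟨i, ab, Function.update_self _ _ _⟩
  have hdies : ∀ b, ¬ S D (Function.update (emptyPos A B (K+1)) i₀ (some (astar, b))) :=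
    fun b hS => hwinq b (stable hK (hsing_ne _ _) hS q')
  have hmoves : ∀ (i : Fin (K+1)) (a : A.carrier), ∃ b,
      S (D - 1) (Function.update (emptyPos A B (K+1)) i (some (a, b))) := by
    intro i a
    have hDD : D = (D - 1) + 1 := by omega
    rw [hDD] at hSD
    exact hSD.2 i a
  have hnoimm : ∀ a : A.carrier,
      ¬ ∃ b, ∀ m, S m (Function.update (emptyPos A B (K+1)) i₀ (some (a, b))) := by
    rintro a ⟨b₁, him⟩
    have hall : ∀ m, ∃ b, S m (Function.update (emptyPos A B (K+1)) i₀ (some (astar, b))) := by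
      intro m
      obtain ⟨b, hb⟩ := (him (m+1)).2 i₀ astar
      rw [Function.update_idem] at hb
      exact ⟨b, hb⟩
    have : ∃ b₂, ∀ m, S m (Function.update (emptyPos A B (K+1)) i₀ (some (astar, b₂))) := by
      by_contra hc
      push_neg at hc
      choose mf hmf using hc
      obtain ⟨b, hb⟩ := hall (Finset.univ.sup mf)
      exact hmf b (S_le (Finset.le_sup (Finset.mem_univ b)) hb)
    obtain ⟨b₂, hb₂⟩ := this
    exact hdies b₂ (hb₂ D)
  have hlevel : ∀ a : A.carrier, ∃ b,
      S (D-1) (Function.update (emptyPos A B (K+1)) i₀ (some (a, b))) ∧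
      ¬ S ((D-1)+1) (Function.update (emptyPos A B (K+1)) i₀ (some (a, b))) := by
    intro a
    obtain ⟨b, hb⟩ := hmoves i₀ a
    refine ⟨b, hb, ?_⟩
    intro hSD'
    have hDD : (D-1)+1 = D := by omega
    rw [hDD] at hSD'
    exact hnoimm a ⟨b, stable hK (hsing_ne _ _) hSD'⟩
  have hxa : ∀ a : A.carrier, ∃ x : Fin K → A.carrier × B.carrier,
      rho x (D-1) ∧ ∀ t, (x t).1 = a := by
    intro a
    obtain ⟨b, hb, hnb⟩ := hlevel a
    obtain ⟨x, hrho, hval⟩ := realize hK (hsing_ne i₀ (a, b)) hb hnb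
    refine ⟨x, hrho, fun t => ?_⟩
    obtain ⟨s, hs⟩ := hval t
    by_cases hsi : s = i₀
    · subst hsi
      rw [Function.update_self] at hs
      have : (a, b) = x t := by injection hs
      rw [← this]
    · rw [Function.update_of_ne hsi] at hs
      cases hs
  choose xa hxrho hxval using hxa
  obtain ⟨a₁, a₂, ha12⟩ := Fintype.exists_pair_of_one_lt_card (α := A.carrier) (by omega)
  have hch : ∀ v, v ≤ D - 1 → ∃ x : Fin K → A.carrier × B.carrier, rho x v := by
    obtain ⟨b, hb, hnb⟩ := hlevel a₁
    exact ranks hK (D-1) ⟨_, hsing_ne i₀ (a₁, b), hb, hnb⟩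
  choose X hX using hch
  set X' : ℕ → (Fin K → A.carrier × B.carrier) :=
    fun v => if h : v ≤ D - 1 then X v h else xa a₁ with hX'def
  have hX' : ∀ v ≤ D - 1, rho (X' v) v := by
    intro v hv
    rw [hX'def]
    simp only [dif_pos hv]
    exact hX v hv
  have hx12 : xa a₁ ≠ xa a₂ := by
    intro he
    exact ha12 (by rw [← hxval a₁ ⟨0, hK⟩, he, hxval a₂ ⟨0, hK⟩])
  have hnotmem : ∀ a, rho (xa a) (D-1) → xa a ∉ (Finset.range (D-1)).image X' := by
    intro a hrho hmem
    obtain ⟨v, hv, he⟩ := Finset.mem_image.1 hmem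
    rw [Finset.mem_range] at hv
    have h2 : rho (xa a) v := he ▸ hX' v (by omega)
    have := rho_func hrho h2
    omega
  have hinj : Set.InjOn X' (Finset.range (D-1)) := by
    intro u hu v hv he
    rw [Finset.coe_range, Set.mem_Iio] at hu hv
    exact rho_func (hX' u (by omega)) (he ▸ hX' v (by omega))
  set T : Finset (Fin K → A.carrier × B.carrier) :=
    insert (xa a₁) (insert (xa a₂) ((Finset.range (D-1)).image X')) with hT
  have hcard : T.card = D + 1 := by
    rw [hT, Finset.card_insert_of_notMem, Finset.card_insert_of_notMem
        (hnotmem a₂ (hxrho a₂)), Finset.card_image_of_injOn hinj, Finset.card_range]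
    · omega
    · rw [Finset.mem_insert]
      push_neg
      exact ⟨hx12, hnotmem a₁ (hxrho a₁)⟩
  have hle := Finset.card_le_univ T
  rw [hcard, ← hD] at hle
  omega

omit [Fintype A.carrier] [Fintype B.carrier] in
lemma empty_core_k1 {q : ℕ} (hq : ¬ S q (emptyPos A B 1)) :
    ¬ S 1 (emptyPos A B 1) := by
  intro hS1
  apply hq
  have main : ∀ m : ℕ, (∀ (i : Fin 1) (a : A.carrier) (b : B.carrier),
      S0 (Function.update (emptyPos A B 1) i (some (a, b))) →
      S m (Function.update (emptyPos A B 1) i (some (a, b)))) ∧ S m (emptyPos A B 1) := by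
    intro m
    induction m with
    | zero => exact ⟨fun i a b h => h, hS1.1⟩
    | succ m ih =>
      constructor
      · intro i a b hS0'
        refine ⟨hS0', ?_⟩
        intro i' a'
        have hii : i' = i := Subsingleton.elim i' i
        subst hii
        obtain ⟨b', hb'⟩ := hS1.2 i' a'
        refine ⟨b', ?_⟩
        rw [Function.update_idem]
        exact ih.1 i' a' b' (S_S0 hb')
      · refine ⟨hS1.1, ?_⟩
        intro i a
        obtain ⟨b, hb⟩ := hS1.2 i a
        exact ⟨b, ih.1 i a b (S_S0 hb)⟩
  exact (main q).2

end Empty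

end EPG
/-- Lemma 12 of the paper. If two `n`-element structures (`n ≥ 2`)
are distinguished by a sentence of `∃⁺L^k`, then they are distinguished by a sentence
`φ` of `∃⁺L^k` with `quant φ ≤ (n^(n^(2k-2)) - 1)/(n - 1)`. -/
theorem statement_8 (σ : Signature) (k n : ℕ) (hk : 1 ≤ k) (hn : 2 ≤ n)
    (A B : Struct σ) (hA : Nat.card A.carrier = n) (hB : Nat.card B.carrier = n)
    (h : ∃ φ : Fml σ, UsesVars k φ ∧ Fml.ExPos φ ∧ IsSentence φ ∧
      Distinguishes A B φ) :
    ∃ φ : Fml σ, UsesVars k φ ∧ Fml.ExPos φ ∧ IsSentence φ ∧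
      φ.quant ≤ (n ^ n ^ (2 * k - 2) - 1) / (n - 1) ∧ Distinguishes A B φ := by
  classical
  obtain ⟨φ₀, hU₀, hE₀, hsent₀, hdist₀⟩ := h
  have hApos : 0 < Nat.card A.carrier := by omega
  have hBpos : 0 < Nat.card B.carrier := by omega
  haveI hAne : Nonempty A.carrier := (Nat.card_pos_iff.1 hApos).1
  haveI hAfin : Finite A.carrier := (Nat.card_pos_iff.1 hApos).2
  haveI hBne : Nonempty B.carrier := (Nat.card_pos_iff.1 hBpos).1
  haveI hBfin : Finite B.carrier := (Nat.card_pos_iff.1 hBpos).2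
  haveI fA : Fintype A.carrier := Fintype.ofFinite _
  haveI fB : Fintype B.carrier := Fintype.ofFinite _
  have hcA : Fintype.card A.carrier = n := by rw [← Nat.card_eq_fintype_card, hA]
  have hcB : Fintype.card B.carrier = n := by rw [← Nat.card_eq_fintype_card, hB]
  obtain ⟨K, rfl⟩ : ∃ K, k = K + 1 := ⟨k - 1, by omega⟩
  have hnSq : ¬ EPG.S φ₀.quant (EPG.emptyPos A B (K+1)) := by
    intro hS
    obtain ⟨g₀, hg₀⟩ : ∃ g₀ : ℕ → B.carrier, ¬ Fml.Sat B g₀ φ₀ := by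
      by_contra hc
      push_neg at hc
      exact hdist₀.2 hc
    apply hg₀
    refine EPG.sound φ₀ hE₀ hU₀ (EPG.emptyPos A B (K+1))
      (fun _ => Classical.arbitrary A.carrier) g₀ hS ?_ ?_ ?_ (hdist₀.1 _)
    · intro i hi
      rw [hsent₀] at hi
      exact absurd hi (Finset.notMem_empty i)
    · intro i ab hab
      cases hab
    · intro i ab hab
      cases hab
  have hnSD : ¬ EPG.S (Fintype.card (Fin K → A.carrier × B.carrier))
      (EPG.emptyPos A B (K+1)) := by
    rcases Nat.eq_zero_or_pos K with rfl | hK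
    · have hc1 : Fintype.card (Fin 0 → A.carrier × B.carrier) = 1 := by simp
      rw [hc1]
      exact EPG.empty_core_k1 hnSq
    · exact EPG.empty_core hK (by omega) (by omega) hnSq
  obtain ⟨φ, hE, hU, hfree, hqb, hsatA, hsatB⟩ := EPG.construct (by omega) _ _ hnSD
  have hcard : Fintype.card (Fin K → A.carrier × B.carrier) = n ^ (2 * (K+1) - 2) := by
    rw [show 2*(K+1)-2 = 2*K from by omega]
    rw [Fintype.card_fun, Fintype.card_prod, Fintype.card_fin, hcA, hcB]
    rw [show n * n = n ^ 2 from (sq n).symm]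
    rw [← pow_mul]
  refine ⟨φ, hU, hE, ?_, ?_, ?_, ?_⟩
  · rw [IsSentence, Finset.eq_empty_iff_forall_notMem]
    intro i hi
    obtain ⟨hik, hne⟩ := hfree i hi
    exact hne rfl
  · calc φ.quant ≤ ∑ t ∈ Finset.range (Fintype.card (Fin K → A.carrier × B.carrier)),
        (Fintype.card B.carrier) ^ t := hqb
      _ = (n ^ n ^ (2 * (K+1) - 2) - 1) / (n - 1) := by
          rw [hcB, hcard, EPG.gsum_div n _ hn]
  · intro f
    exact hsatA f (fun i ab hab => by cases hab)
  · intro hSS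
    exact hsatB (fun _ => Classical.arbitrary B.carrier)
      (fun i ab hab => by cases hab) (hSS _)

end QVT
end

section
/- Let G be a finite abelian group, V a finite set of variables, and F a formula (a finite set of clauses) over G and V, with associated structures 𝒜(F) and ℬ(F). (i) If Y ⊆ A(F) and σ : Y → B(F) is assignment defining and a partial isomorphism, then the induced partial assignment σ̂ : π(Y) → G violates no clause of F. (ii) Conversely, if X ⊆ V and f : X → G is a partial assignment that violates no clause of F, then for every Y ⊆ A(F) with π(Y) = X, the map f̂_Y : Y → B(F) is a partial isomorphism. -/
namespace QVT

/-- A constraint over variables `V` and group `G`: a tuple of variables together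
with a subset `H ⊆ G`. -/
structure Constraint (V G : Type) : Type where
  vars : List V
  H : Set G

/-- A (total) assignment satisfies a constraint if the sum of the values of its
variables lies in `H`. -/
def Constraint.SatBy {V G : Type} [AddCommMonoid G] (C : Constraint V G) (f : V → G) : Prop :=
  (C.vars.map f).sum ∈ C.H

/-- A partial assignment (a function `f` regarded on the domain `X`) violates no
constraint of `F`: every constraint of `F` all of whose variables lie in `X` is
satisfied. -/
def ViolatesNoClause {V G : Type} [AddCommMonoid G]
    (F : Finset (Constraint V G)) (X : Set V) (f : V → G) : Prop :=
  ∀ C ∈ F, (∀ x ∈ C.vars, x ∈ X) → C.SatBy f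

/-- The set of the constraint `C` in `F̂`: its complement if `C` is
distinguishing (i.e. `C ∈ D`), and `C.H` otherwise. -/
def hatH {V G : Type} (D : Set (Constraint V G)) (C : Constraint V G) : Set G :=
  {g | (C ∈ D → g ∉ C.H) ∧ (C ∉ D → g ∈ C.H)}

/-- `F` (with distinguishing constraints `D`) is a formula over `G` using at most
`k`-ary clauses: each clause is a nonrepeating tuple of at most `k` variables, and
each set appearing in `F̂` is a subgroup of index two. -/
def IsXorFormula {V G : Type} [AddCommGroup G] (k : ℕ)
    (F : Finset (Constraint V G)) (D : Set (Constraint V G)) : Prop :=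
  (∀ C ∈ D, C ∈ F) ∧
  ∀ C ∈ F, C.vars.Nodup ∧ C.vars.length ≤ k ∧
    ∃ H' : AddSubgroup G, hatH D C = ↑H' ∧ H'.index = 2

/-- The common signature of the structures `𝒜(F)` and `ℬ(F)`: a unary relation
symbol `R_x` for each variable `x` and an `m`-ary relation symbol `R_C` for each
constraint `C ∈ F` on `m` variables. -/
@[reducible] def xorSig (V G : Type) [Fintype V] [Fintype G]
    (F : Finset (Constraint V G)) : Signature where
  symbols := V ⊕ {C : Constraint V G // C ∈ F}
  fin := inferInstance
  arity := fun s => match s with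
    | Sum.inl _ => 1
    | Sum.inr C => C.1.vars.length

/-- The structure with domain `V × G` (the element `x^g` is the pair `(x,g)`),
where the relation of the constraint `C` is interpreted using the set `Hf C`. -/
@[reducible] def mkXorStruct (V G : Type) [Fintype V] [Fintype G] [AddCommMonoid G]
    (F : Finset (Constraint V G)) (Hf : Constraint V G → Set G) :
    Struct (xorSig V G F) where
  carrier := V × G
  rel := fun R => match R with
    | Sum.inl x => fun t => (t 0).1 = x
    | Sum.inr C => fun t => (∀ i, (t i).1 = C.1.vars.get i) ∧ (∑ i, (t i).2) ∈ Hf C.1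

/-- The structure `𝒜(F) = X(F̂)` (with relations renamed to the common signature). -/
@[reducible] def Astruct (V G : Type) [Fintype V] [Fintype G] [AddCommMonoid G]
    (F : Finset (Constraint V G)) (D : Set (Constraint V G)) : Struct (xorSig V G F) :=
  mkXorStruct V G F (hatH D)

/-- The structure `ℬ(F) = X(F)`. -/
@[reducible] def Bstruct (V G : Type) [Fintype V] [Fintype G] [AddCommMonoid G]
    (F : Finset (Constraint V G)) : Struct (xorSig V G F) :=
  mkXorStruct V G F (fun C => C.H)

/-- An isomorphism between two structures over a common signature: a bijection of
the domains preserving all relations in both directions. -/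
def Isomorphic {σ : Signature} (A B : Struct σ) : Prop :=
  ∃ e : A.carrier ≃ B.carrier,
    ∀ (R : σ.symbols) (t : Fin (σ.arity R) → A.carrier),
      A.rel R t ↔ B.rel R (fun i => e (t i))

/-- `m : Y → B(F)` (with `Y ⊆ A(F) = V × G`) is assignment defining: it respects
the first (variable) component, and `|m y| + |y|` depends only on `π y`. -/
def AssignDefining {V G : Type} [AddCommMonoid G] (Y : Set (V × G)) (m : Y → V × G) : Prop :=
  (∀ y : Y, (m y).1 = (y : V × G).1) ∧
  ∀ y z : Y, (y : V × G).1 = (z : V × G).1 →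
    (m y).2 + (y : V × G).2 = (m z).2 + (z : V × G).2

/-- `m : Y → B.carrier` (with `Y ⊆ A.carrier`) is a partial isomorphism: it is
injective and preserves all relations in both directions. -/
def PartialIsoMap {σ : Signature} (A B : Struct σ) (Y : Set A.carrier)
    (m : Y → B.carrier) : Prop :=
  Function.Injective m ∧
  ∀ (R : σ.symbols) (t : Fin (σ.arity R) → Y),
    A.rel R (fun i => (t i : A.carrier)) ↔ B.rel R (fun i => m (t i))


private lemma list_sum_map_eq {V G : Type} [AddCommMonoid G] (l : List V) (f : V → G) :
    ∑ i : Fin l.length, f (l.get i) = (l.map f).sum := by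
  induction l with
  | nil => simp
  | cons a l ih => rw [List.map_cons, List.sum_cons, ← ih]; exact Fin.sum_univ_succ _

private lemma hatH_of_mem {V G : Type} {D : Set (Constraint V G)} {C : Constraint V G}
    (h : C ∈ D) : hatH D C = C.Hᶜ := by
  ext g; simp [hatH, h]

private lemma hatH_of_not_mem {V G : Type} {D : Set (Constraint V G)} {C : Constraint V G}
    (h : C ∉ D) : hatH D C = C.H := by
  ext g; simp [hatH, h]

/-- Lemma 22 of the paper. (i) If `m : Y → B(F)` is assignment
defining and a partial isomorphism, then the induced partial assignment `σ̂` (encoded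
here by all of its total extensions `f`) violates no clause of `F`.  (ii) Conversely,
if `f` violates no clause of `F` on `X` and `Y ⊆ A(F)` projects onto `X`, then `f̂_Y`
is a partial isomorphism. -/
theorem statement_10 {V G : Type} [Fintype V] [Fintype G] [AddCommGroup G]
    (k : ℕ) (F : Finset (Constraint V G)) (D : Set (Constraint V G))
    (hF : IsXorFormula k F D) :
    (∀ (Y : Set (V × G)) (m : Y → V × G),
      AssignDefining Y m →
      PartialIsoMap (Astruct V G F D) (Bstruct V G F) Y m →
      ∀ f : V → G, (∀ y : Y, f (y : V × G).1 = (m y).2 + (y : V × G).2) →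
        ViolatesNoClause F (Prod.fst '' Y) f) ∧
    (∀ (X : Set V) (f : V → G), ViolatesNoClause F X f →
      ∀ Y : Set (V × G), Prod.fst '' Y = X →
        PartialIsoMap (Astruct V G F D) (Bstruct V G F) Y
          (fun y => ((y : V × G).1, f (y : V × G).1 - (y : V × G).2))) := by
  obtain ⟨hDF, hcl⟩ := hF
  constructor
  · rintro Y m had hiso f hf C hC hvars
    obtain ⟨-, -, H', hH', hind⟩ := hcl C hC
    have hty : ∀ i : Fin C.vars.length, ∃ y : Y, (y : V × G).1 = C.vars.get i := by
      intro i
      obtain ⟨p, hpY, hp⟩ := hvars _ (C.vars.get_mem i)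
      exact ⟨⟨p, hpY⟩, hp⟩
    choose t ht using hty
    have hiff := hiso.2 (Sum.inr ⟨C, hC⟩) t
    have hA1 : ∀ i, ((t i : V × G)).1 = C.vars.get i := ht
    have hB1 : ∀ i, (m (t i)).1 = C.vars.get i := fun i => (had.1 (t i)).trans (ht i)
    have key : ((∑ i, ((t i : V × G)).2) ∈ hatH D C) ↔ ((∑ i, (m (t i)).2) ∈ C.H) := by
      constructor
      · intro h; exact (hiff.1 ⟨hA1, h⟩).2
      · intro h; exact (hiff.2 ⟨hB1, h⟩).2
    set a := ∑ i, ((t i : V × G)).2 with ha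
    set b := ∑ i, (m (t i)).2 with hb
    have hfsum : (C.vars.map f).sum = b + a := by
      rw [← list_sum_map_eq, ha, hb, ← Finset.sum_add_distrib]
      refine Finset.sum_congr rfl fun i _ => ?_
      rw [← ht i]; exact hf (t i)
    show (C.vars.map f).sum ∈ C.H
    rw [hfsum]
    by_cases hCD : C ∈ D
    · have h1 : C.Hᶜ = (↑H' : Set G) := (hatH_of_mem hCD).symm.trans hH'
      have hCH : C.H = (↑H' : Set G)ᶜ := by rw [← h1, compl_compl]
      rw [hH', hCH] at key
      rw [hCH]
      simp only [Set.mem_compl_iff, SetLike.mem_coe] at key ⊢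
      rw [AddSubgroup.add_mem_iff_of_index_two hind]
      tauto
    · have hCH : C.H = (↑H' : Set G) := (hatH_of_not_mem hCD).symm.trans hH'
      rw [hH', hCH] at key
      rw [hCH]
      simp only [SetLike.mem_coe] at key ⊢
      rw [AddSubgroup.add_mem_iff_of_index_two hind]
      tauto
  · rintro X f hviol Y rfl
    constructor
    · intro y z h
      have h' : ((y : V × G).1, f (y : V × G).1 - (y : V × G).2) =
          ((z : V × G).1, f (z : V × G).1 - (z : V × G).2) := h
      injection h' with h1 h2
      rw [h1] at h2
      exact Subtype.ext (Prod.ext h1 (sub_right_inj.1 h2))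
    · intro R t
      match R with
      | Sum.inl x => exact Iff.rfl
      | Sum.inr ⟨C, hC⟩ =>
        obtain ⟨-, -, H', hH', hind⟩ := hcl C hC
        have main : ∀ h1 : (∀ i, ((t i : V × G)).1 = C.vars.get i),
            (((∑ i, ((t i : V × G)).2) ∈ hatH D C) ↔
              ((∑ i, (f ((t i : V × G)).1 - ((t i : V × G)).2)) ∈ C.H)) := by
          intro h1
          have hmem : ∀ x ∈ C.vars, x ∈ Prod.fst '' Y := by
            intro x hx
            obtain ⟨i, rfl⟩ := List.mem_iff_get.1 hx
            exact ⟨t i, (t i).2, h1 i⟩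
          have hsat : (C.vars.map f).sum ∈ C.H := hviol C hC hmem
          set S := (C.vars.map f).sum with hSdef
          set a := ∑ i, ((t i : V × G)).2 with ha
          have hsum : (∑ i, (f ((t i : V × G)).1 - ((t i : V × G)).2)) = S - a := by
            rw [Finset.sum_sub_distrib, ha, hSdef, ← list_sum_map_eq]
            congr 1
            exact Finset.sum_congr rfl fun i _ => by rw [h1 i]
          rw [hsum]
          have hkey : (a + (S - a) ∈ H') ↔ (a ∈ H' ↔ S - a ∈ H') :=
            AddSubgroup.add_mem_iff_of_index_two hind
          rw [show a + (S - a) = S by abel] at hkey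
          by_cases hCD : C ∈ D
          · have h2 : C.Hᶜ = (↑H' : Set G) := (hatH_of_mem hCD).symm.trans hH'
            have hCH : C.H = (↑H' : Set G)ᶜ := by rw [← h2, compl_compl]
            have hSnot : S ∉ H' := by
              rw [hCH] at hsat
              simpa using hsat
            rw [hH', hCH]
            simp only [Set.mem_compl_iff, SetLike.mem_coe]
            tauto
          · have hCH : C.H = (↑H' : Set G) := (hatH_of_not_mem hCD).symm.trans hH'
            have hS' : S ∈ H' := by rw [hCH] at hsat; simpa using hsat
            rw [hH', hCH]
            simp only [SetLike.mem_coe]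
            tauto
        constructor
        · rintro ⟨h1, h2⟩
          exact ⟨h1, (main h1).1 h2⟩
        · rintro ⟨h1, h2⟩
          exact ⟨h1, (main h1).2 h2⟩


end QVT
end

section
/- Let G be a finite abelian group, V a finite set of variables, and F a formula (a finite set of clauses) over G and V. Then F is satisfiable (i.e., some total assignment f : V → G satisfies every clause of F) if and only if the structures 𝒜(F) and ℬ(F) are isomorphic. -/
namespace QVT

private lemma listSum_map_get {α β : Type*} [AddCommMonoid β] (l : List α) (f : α → β) :
    (l.map f).sum = ∑ i : Fin l.length, f (l.get i) := by
  conv_lhs => rw [← List.ofFn_get l]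
  simp [List.map_ofFn, Function.comp]

/-- Lemma 22, final claim. A formula `F` over a finite abelian
group is satisfiable if and only if the associated structures `𝒜(F)` and `ℬ(F)` are
isomorphic. -/
theorem statement_11 {V G : Type} [Fintype V] [Fintype G] [AddCommGroup G]
    (k : ℕ) (F : Finset (Constraint V G)) (D : Set (Constraint V G))
    (hF : IsXorFormula k F D) :
    (∃ f : V → G, ∀ C ∈ F, C.SatBy f) ↔
      Isomorphic (Astruct V G F D) (Bstruct V G F) := by
  obtain ⟨hD, hcl⟩ := hF
  constructor
  · rintro ⟨f, hf⟩
    refine ⟨⟨fun p => (p.1, p.2 + f p.1), fun p => (p.1, p.2 - f p.1),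
      fun p => by simp, fun p => by simp⟩, ?_⟩
    rintro (x | C) t
    · exact Iff.rfl
    · obtain ⟨hnd, hlen, H', hH', h2⟩ := hcl C.1 C.2
      have hsF : (C.1.vars.map f).sum ∈ C.1.H := hf C.1 C.2
      have hmemH : ∀ g : G, g ∈ hatH D C.1 ↔ g ∈ H' := by
        intro g
        rw [hH']; exact Iff.rfl
      have key : ∀ s : G, s ∈ hatH D C.1 ↔ s + (C.1.vars.map f).sum ∈ C.1.H := by
        intro s
        have hx := AddSubgroup.add_mem_iff_of_index_two h2 (a := s)
          (b := (C.1.vars.map f).sum)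
        by_cases hCD : C.1 ∈ D
        · have hH2 : ∀ g : G, g ∈ C.1.H ↔ g ∉ H' := by
            intro g
            rw [← hmemH]
            simp [hatH, hCD]
          rw [hmemH, hH2]
          rw [hH2] at hsF
          tauto
        · have hH2 : ∀ g : G, g ∈ C.1.H ↔ g ∈ H' := by
            intro g
            rw [← hmemH]
            simp [hatH, hCD]
          rw [hmemH, hH2]
          rw [hH2] at hsF
          tauto
      constructor
      · rintro ⟨h1, h2⟩
        refine ⟨h1, ?_⟩
        have h1' : ∀ i, (t i).1 = (C.1).vars.get i := h1
        have hsum : (∑ i, ((t i).2 + f (t i).1)) =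
            (∑ i, (t i).2) + (C.1.vars.map f).sum := by
          rw [Finset.sum_add_distrib, listSum_map_get]
          congr 1
          exact Finset.sum_congr rfl fun i _ => by rw [h1' i]
        show (∑ i, ((t i).2 + f (t i).1)) ∈ C.1.H
        rw [hsum]
        exact (key _).mp h2
      · rintro ⟨h1, h2⟩
        refine ⟨h1, ?_⟩
        have h1' : ∀ i, (t i).1 = (C.1).vars.get i := h1
        have hsum : (∑ i, ((t i).2 + f (t i).1)) =
            (∑ i, (t i).2) + (C.1.vars.map f).sum := by
          rw [Finset.sum_add_distrib, listSum_map_get]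
          congr 1
          exact Finset.sum_congr rfl fun i _ => by rw [h1' i]
        have h2' : (∑ i, ((t i).2 + f (t i).1)) ∈ C.1.H := h2
        rw [hsum] at h2'
        exact (key _).mpr h2'
  · rintro ⟨e, he⟩
    have hfst : ∀ p : V × G, (e p).1 = p.1 := fun p =>
      (he (Sum.inl p.1) (fun _ => p)).mp rfl
    refine ⟨fun x => (e (x, (0 : G))).2, fun C hC => ?_⟩
    obtain ⟨hnd, hlen, H', hH', h2⟩ := hcl C hC
    have h0 : (∑ _i : Fin C.vars.length, (0 : G)) ∈ hatH D C := by
      rw [hH']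
      simp
    have h := (he (Sum.inr ⟨C, hC⟩) (fun i => (C.vars.get i, (0 : G)))).mp
      ⟨fun i => rfl, h0⟩
    show (C.vars.map _).sum ∈ C.H
    rw [listSum_map_get]
    exact h.2


end QVT
end

section
/- Let G be a finite abelian group, V a finite set of variables, F a formula over G and V, and let α, β be compatible k-assignments into A(F) and B(F) respectively such that π(α(i)) = π(β(i)) for all i in their common domain and the map α(i) ↦ β(i) is assignment defining. Then the pebbled structures 𝒜(F)^α and ℬ(F)^β are partially isomorphic if and only if for every clause C = (x_1,…,x_m, H) ∈ F and every tuple (i_1,…,i_m) of indices in the common domain with π(α(i_j)) = x_j for all j, one has Σ_{j=1}^m (|α(i_j)| + |β(i_j)|) ∈ H. -/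
namespace QVT

private lemma key_iff {V G : Type} [AddCommGroup G] {D : Set (Constraint V G)}
    {C : Constraint V G} {H' : AddSubgroup G} (hset : hatH D C = ↑H')
    (hidx : H'.index = 2) (s t : G) :
    (s ∈ hatH D C ↔ t ∈ C.H) ↔ s + t ∈ C.H := by
  by_cases hCD : C ∈ D
  · have hcomp : ∀ g : G, g ∈ C.H ↔ g ∉ H' := by
      intro g
      have : g ∈ hatH D C ↔ g ∉ C.H := by
        simp [hatH, hCD]
      have h2 : g ∈ (H' : Set G) ↔ g ∉ C.H := by rw [← hset]; exact this
      constructor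
      · intro hg hg'; exact (h2.mp hg') hg
      · intro hg; by_contra hg'; exact hg (h2.mpr hg')
    rw [hcomp, hcomp, hset, AddSubgroup.add_mem_iff_of_index_two hidx]
    simp only [SetLike.mem_coe]
    tauto
  · have heq : ∀ g : G, g ∈ C.H ↔ g ∈ H' := by
      intro g
      have : g ∈ hatH D C ↔ g ∈ C.H := by simp [hatH, hCD]
      have h2 : g ∈ (H' : Set G) ↔ g ∈ C.H := by rw [← hset]; exact this
      exact h2.symm
    rw [heq, heq, hset, AddSubgroup.add_mem_iff_of_index_two hidx]
    simp only [SetLike.mem_coe]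
/-- Corollary 23 of the paper. Let `α, β` be compatible
`k`-assignments into `A(F)` and `B(F)` (encoded by a common domain `dom ⊆ {0,…,k-1}`
and total functions `a, b` read on `dom`) with `π(α i) = π(β i)` and such that
`α i ↦ β i` is assignment defining.  Then `𝒜(F)^α` and `ℬ(F)^β` are partially
isomorphic iff for every clause `C = (x_1,…,x_m,H) ∈ F` and all pebbles
`i_1,…,i_m ∈ dom` with `π(α(i_j)) = x_j`, `Σ_j (|α(i_j)| + |β(i_j)|) ∈ H`. -/
theorem statement_12 {V G : Type} [Fintype V] [Fintype G] [AddCommGroup G]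
    (k : ℕ) (F : Finset (Constraint V G)) (D : Set (Constraint V G))
    (hF : IsXorFormula k F D)
    (dom : Set ℕ) (hdom : ∀ i ∈ dom, i < k)
    (a b : ℕ → V × G)
    (hπ : ∀ i ∈ dom, (a i).1 = (b i).1)
    (had : ∀ i ∈ dom, ∀ j ∈ dom, (a i).1 = (a j).1 →
      (b i).2 + (a i).2 = (b j).2 + (a j).2) :
    ((∀ i ∈ dom, ∀ j ∈ dom, (a i = a j ↔ b i = b j)) ∧
      ∀ (R : (xorSig V G F).symbols) (ι : Fin ((xorSig V G F).arity R) → ℕ),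
        (∀ m, ι m ∈ dom) →
        ((Astruct V G F D).rel R (fun m => a (ι m)) ↔
          (Bstruct V G F).rel R (fun m => b (ι m))))
    ↔
    (∀ C ∈ F, ∀ ι : Fin C.vars.length → ℕ, (∀ m, ι m ∈ dom) →
      (∀ m, (a (ι m)).1 = C.vars.get m) →
      (∑ m, ((a (ι m)).2 + (b (ι m)).2)) ∈ C.H) := by
  obtain ⟨hD, hF2⟩ := hF
  constructor
  · rintro ⟨-, hrel⟩ C hC ι hι hvars
    obtain ⟨-, -, H', hset, hidx⟩ := hF2 C hC
    have h := hrel (Sum.inr ⟨C, hC⟩) ι hι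
    simp only [Astruct, Bstruct, mkXorStruct] at h
    have hb : ∀ m, (b (ι m)).1 = C.vars.get m := fun m =>
      (hπ (ι m) (hι m)).symm.trans (hvars m)
    have hmem : (∑ m, (a (ι m)).2) ∈ hatH D C ↔ (∑ m, (b (ι m)).2) ∈ C.H := by
      constructor
      · intro hs; exact (h.mp ⟨hvars, hs⟩).2
      · intro hs; exact (h.mpr ⟨hb, hs⟩).2
    have := (key_iff hset hidx _ _).mp hmem
    rwa [Finset.sum_add_distrib]
  · intro hsum
    constructor
    · intro i hi j hj
      constructor
      · intro hij
        have h1 : (a i).1 = (a j).1 := by rw [hij]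
        have h2 := had i hi j hj h1
        rw [Prod.ext_iff] at hij ⊢
        refine ⟨(hπ i hi).symm.trans (hij.1.trans (hπ j hj)), ?_⟩
        rw [hij.2] at h2
        exact add_right_cancel h2
      · intro hij
        rw [Prod.ext_iff] at hij ⊢
        have h1 : (a i).1 = (a j).1 := (hπ i hi).trans (hij.1.trans (hπ j hj).symm)
        have h2 := had i hi j hj h1
        rw [hij.2] at h2
        exact ⟨h1, add_left_cancel h2⟩
    · rintro (x | ⟨C, hC⟩) ι hι
      · simp only [Astruct, Bstruct, mkXorStruct]
        rw [hπ (ι 0) (hι 0)]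
      · obtain ⟨-, -, H', hset, hidx⟩ := hF2 C hC
        simp only [Astruct, Bstruct, mkXorStruct]
        have hfst : (∀ m, (a (ι m)).1 = C.vars.get m) ↔
            (∀ m, (b (ι m)).1 = C.vars.get m) := by
          constructor <;> intro h m
          · exact (hπ (ι m) (hι m)).symm.trans (h m)
          · exact (hπ (ι m) (hι m)).trans (h m)
        constructor
        · rintro ⟨h1, h2⟩
          refine ⟨hfst.mp h1, ?_⟩
          have hs := hsum C hC ι hι h1
          rw [Finset.sum_add_distrib] at hs
          exact ((key_iff hset hidx _ _).mpr hs).mp h2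
        · rintro ⟨h1, h2⟩
          have h1' := hfst.mpr h1
          refine ⟨h1', ?_⟩
          have hs := hsum C hC ι hι h1'
          rw [Finset.sum_add_distrib] at hs
          exact ((key_iff hset hidx _ _).mpr hs).mpr h2

end QVT
end

section
/- Let k ≥ 1 and let g_1, …, g_k ∈ Z_2^k satisfy: g_1 ∈ ODD; g_i ∈ EVEN for every 2 ≤ i ≤ k; and g_i[i] = 0 for every i ∈ {1,…,k}. Then there exists ℓ ∈ {1,…,k} such that Σ_{i ∈ {1,…,k}∖{ℓ}} g_i[ℓ] = 1 (sum taken in Z_2). -/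
/-- the key combinatorial step in Lemma 24 of the paper. If
`g_1 ∈ ODD`, `g_i ∈ EVEN` for `i ≥ 2` and `g_i[i] = 0` for all `i`, then there is a
coordinate `ℓ` with `Σ_{i ≠ ℓ} g_i[ℓ] = 1`. -/
theorem statement_13 (k : ℕ) (hk : 1 ≤ k) (g : Fin k → Fin k → ZMod 2)
    (h1 : ∑ j, g ⟨0, hk⟩ j = 1)
    (h2 : ∀ i : Fin k, i ≠ ⟨0, hk⟩ → ∑ j, g i j = 0)
    (h3 : ∀ i : Fin k, g i i = 0) :
    ∃ ℓ : Fin k, ∑ i ∈ Finset.univ.erase ℓ, g i ℓ = 1 := by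
  have key : ∑ ℓ : Fin k, ∑ i ∈ Finset.univ.erase ℓ, g i ℓ = 1 := by
    have e : ∀ ℓ : Fin k, ∑ i ∈ Finset.univ.erase ℓ, g i ℓ = ∑ i, g i ℓ := fun ℓ =>
      Finset.sum_erase _ (h3 ℓ)
    rw [Finset.sum_congr rfl (fun ℓ _ => e ℓ), Finset.sum_comm,
      Finset.sum_eq_single ⟨0, hk⟩ (fun i _ hi => h2 i hi) (by simp)]
    exact h1
  by_contra h
  push_neg at h
  have hz : ∀ a : ZMod 2, a ≠ 1 → a = 0 := by decide
  have : ∑ ℓ : Fin k, ∑ i ∈ Finset.univ.erase ℓ, g i ℓ = 0 :=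
    Finset.sum_eq_zero fun ℓ _ => hz _ (h ℓ)
  rw [this] at key
  exact one_ne_zero key.symm
end

section
/- For every odd k ≥ 3, there is a sentence of L^k (over the common signature of 𝒜(F) and ℬ(F)) that is true in 𝒜 = 𝒜(F) and false in ℬ = ℬ(F); that is, 𝒜 and ℬ can be distinguished in k-variable first-order logic. -/
namespace QVT

/-- The group `Z_2^k`. -/
abbrev Gk (k : ℕ) : Type := Fin k → ZMod 2

/-- The variable set `V = {s_1, …, s_k, e_1, …, e_k}`: `Sum.inl i` is `s_{i+1}`
and `Sum.inr ℓ` is `e_{ℓ+1}`. -/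
abbrev Vk (k : ℕ) : Type := Fin k ⊕ Fin k

/-- The elements of `Z_2^k` whose coordinates sum to `0`. -/
def EVEN (k : ℕ) : Set (Gk k) := {g | ∑ i, g i = 0}

/-- The elements of `Z_2^k` whose coordinates sum to `1`. -/
def ODD (k : ℕ) : Set (Gk k) := {g | ∑ i, g i = 1}

open scoped Classical in
/-- The formula `F` over `Z_2^k` from Section 5: clauses `s_1 ∈ ODD`;
`s_i ∈ EVEN` for `i ≠ 1`; `(e_ℓ + Σ_{i≠ℓ} s_i)[ℓ] = 0`; `s_i[i] = 0`;
`e_ℓ[i] = 0`. -/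
noncomputable def baseF (k : ℕ) (hk : 0 < k) : Finset (Constraint (Vk k) (Gk k)) :=
  {⟨[Sum.inl ⟨0, hk⟩], ODD k⟩}
  ∪ (Finset.univ.filter (fun i : Fin k => i ≠ ⟨0, hk⟩)).image
      (fun i : Fin k => ⟨[Sum.inl i], EVEN k⟩)
  ∪ Finset.univ.image (fun ℓ : Fin k =>
      ⟨Sum.inr ℓ :: (Finset.univ.erase ℓ).toList.map Sum.inl, {g : Gk k | g ℓ = 0}⟩)
  ∪ Finset.univ.image (fun i : Fin k => ⟨[Sum.inl i], {g : Gk k | g i = 0}⟩)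
  ∪ Finset.univ.image (fun p : Fin k × Fin k => ⟨[Sum.inr p.1], {g : Gk k | g p.2 = 0}⟩)

/-- The set of distinguishing clauses of `baseF`: just `s_1 ∈ ODD`. -/
def baseD (k : ℕ) (hk : 0 < k) : Set (Constraint (Vk k) (Gk k)) :=
  {⟨[Sum.inl ⟨0, hk⟩], ODD k⟩}

/-- `j+1` as an element of `Fin n` (junk value `j` if `j` is the last index). -/
def succIdx {n : ℕ} (j : Fin n) : Fin n := if h : j.1 + 1 < n then ⟨j.1 + 1, h⟩ else j

open scoped Classical in
/-- The chained formula `𝓕` with `n` links: the variable `x(i)` is the pair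
`(i, x)`.  It consists of the clauses of the `n` copies of `baseF`, except that
`s_1(i) ∈ ODD` is kept only for `i = 1` and `e_ℓ(i)[ℓ] = 0` only for `i = n`,
together with the linking clauses `e_ℓ(i) + s_1(i+1) ∈ EVEN` for `i ∈ [n-1]`. -/
noncomputable def chainF (k n : ℕ) (hk : 0 < k) (hn : 0 < n) :
    Finset (Constraint (Fin n × Vk k) (Gk k)) :=
  {⟨[((⟨0, hn⟩ : Fin n), Sum.inl ⟨0, hk⟩)], ODD k⟩}
  ∪ (Finset.univ.filter (fun p : Fin n × Fin k => p.2 ≠ ⟨0, hk⟩)).image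
      (fun p : Fin n × Fin k => ⟨[(p.1, Sum.inl p.2)], EVEN k⟩)
  ∪ Finset.univ.image (fun p : Fin n × Fin k =>
      ⟨(p.1, Sum.inr p.2) ::
          (Finset.univ.erase p.2).toList.map (fun i : Fin k => (p.1, Sum.inl i)),
        {g : Gk k | g p.2 = 0}⟩)
  ∪ Finset.univ.image (fun p : Fin n × Fin k =>
      ⟨[(p.1, Sum.inl p.2)], {g : Gk k | g p.2 = 0}⟩)
  ∪ ((Finset.univ : Finset (Fin n × Fin k × Fin k)).filter
        (fun p => p.2.2 ≠ p.2.1 ∨ p.1 = (⟨n - 1, by omega⟩ : Fin n))).image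
      (fun p : Fin n × Fin k × Fin k =>
        ⟨[(p.1, Sum.inr p.2.1)], {g : Gk k | g p.2.2 = 0}⟩)
  ∪ ((Finset.univ : Finset (Fin n × Fin k)).filter (fun p => p.1.1 + 1 < n)).image
      (fun p : Fin n × Fin k =>
        ⟨[(p.1, Sum.inr p.2), (succIdx p.1, Sum.inl ⟨0, hk⟩)], EVEN k⟩)

/-- The set of distinguishing clauses of `chainF`: just `s_1(1) ∈ ODD`. -/
def chainD (k n : ℕ) (hk : 0 < k) (hn : 0 < n) : Set (Constraint (Fin n × Vk k) (Gk k)) :=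
  {⟨[((⟨0, hn⟩ : Fin n), Sum.inl ⟨0, hk⟩)], ODD k⟩}

/-! ### Auxiliary machinery for statement_15 -/

section Aux

variable {σ : Signature}

/-- Conjunction of a list of formulas. -/
def andList : List (Fml σ) → Fml σ
  | [] => .eq 0 0
  | ψ :: L => .and ψ (andList L)

/-- Block of existential quantifiers. -/
def exList : List ℕ → Fml σ → Fml σ
  | [], ψ => ψ
  | i :: L, ψ => .ex i (exList L ψ)

lemma sat_andList (M : Struct σ) (f : ℕ → M.carrier) (L : List (Fml σ)) :
    Fml.Sat M f (andList L) ↔ ∀ ψ ∈ L, Fml.Sat M f ψ := by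
  induction L with
  | nil => simp [andList, Fml.Sat]
  | cons ψ L ih => simp [andList, Fml.Sat, ih]

lemma vars_andList (L : List (Fml σ)) :
    (andList L).vars ⊆ insert 0 (L.foldr (fun ψ s => ψ.vars ∪ s) ∅) := by
  induction L with
  | nil => simp [andList, Fml.vars]
  | cons ψ L ih =>
    intro i hi
    simp only [andList, Fml.vars, Finset.mem_union] at hi
    rcases hi with hi | hi
    · simp [hi]
    · have := ih hi
      simp only [Finset.mem_insert, Finset.mem_union, List.foldr] at this ⊢
      tauto

lemma freeVars_andList (L : List (Fml σ)) :
    (andList L).freeVars ⊆ insert 0 (L.foldr (fun ψ s => ψ.freeVars ∪ s) ∅) := by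
  induction L with
  | nil => simp [andList, Fml.freeVars]
  | cons ψ L ih =>
    intro i hi
    simp only [andList, Fml.freeVars, Finset.mem_union] at hi
    rcases hi with hi | hi
    · simp [hi]
    · have := ih hi
      simp only [Finset.mem_insert, Finset.mem_union, List.foldr] at this ⊢
      tauto

lemma vars_exList (L : List ℕ) (ψ : Fml σ) :
    (exList L ψ).vars ⊆ L.toFinset ∪ ψ.vars := by
  induction L with
  | nil => simp [exList]
  | cons i L ih =>
    intro j hj
    simp only [exList, Fml.vars, Finset.mem_insert] at hj
    rcases hj with rfl | hj
    · simp
    · have := ih hj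
      simp only [Finset.mem_union, List.mem_toFinset, List.toFinset_cons,
        Finset.mem_insert] at this ⊢
      tauto

lemma freeVars_exList (L : List ℕ) (ψ : Fml σ) :
    (exList L ψ).freeVars ⊆ ψ.freeVars \ L.toFinset := by
  induction L with
  | nil => simp [exList]
  | cons i L ih =>
    intro j hj
    simp only [exList, Fml.freeVars, Finset.mem_erase] at hj
    obtain ⟨hji, hj⟩ := hj
    have := ih hj
    simp only [Finset.mem_sdiff, List.mem_toFinset, List.toFinset_cons,
      Finset.mem_insert] at this ⊢
    tauto

lemma sat_exList_of (M : Struct σ) (f g : ℕ → M.carrier) (L : List ℕ) (ψ : Fml σ)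
    (hg : ∀ i, i ∉ L → g i = f i) (h : Fml.Sat M g ψ) :
    Fml.Sat M f (exList L ψ) := by
  induction L generalizing f with
  | nil =>
    have : g = f := funext fun i => hg i (by simp)
    rwa [← this]
  | cons i L ih =>
    refine ⟨g i, ih (Function.update f i (g i)) ?_⟩
    intro j hj
    rcases eq_or_ne j i with rfl | hne
    · simp
    · rw [Function.update_of_ne hne]
      exact hg j (by simp [hj, hne])

lemma exists_sat_of_sat_exList (M : Struct σ) (f : ℕ → M.carrier) (L : List ℕ) (ψ : Fml σ)
    (h : Fml.Sat M f (exList L ψ)) : ∃ g, Fml.Sat M g ψ := by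
  induction L generalizing f with
  | nil => exact ⟨f, h⟩
  | cons i L ih =>
    obtain ⟨a, ha⟩ := h
    exact ih _ ha

end Aux

section Clauses

variable (k : ℕ) (hk : 0 < k)

/-- Canonical variable index for a variable of `Vk k`. -/
def varIdx : Vk k → ℕ := Sum.elim Fin.val Fin.val

lemma varIdx_lt (x : Vk k) : varIdx k x < k := by
  cases x <;> simp [varIdx]

/-- Parity clause for `s_i`. -/
def Cpar (i : Fin k) : Constraint (Vk k) (Gk k) :=
  ⟨[Sum.inl i], if i = (⟨0, hk⟩ : Fin k) then ODD k else EVEN k⟩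

/-- Clause `s_i[i] = 0`. -/
def Cs (i : Fin k) : Constraint (Vk k) (Gk k) := ⟨[Sum.inl i], {g : Gk k | g i = 0}⟩

/-- Clause `e_ℓ[i] = 0`. -/
def Ce (ℓ i : Fin k) : Constraint (Vk k) (Gk k) := ⟨[Sum.inr ℓ], {g : Gk k | g i = 0}⟩

/-- The big clause `(e_ℓ + Σ_{i≠ℓ} s_i)[ℓ] = 0`. -/
noncomputable def Cbig (ℓ : Fin k) : Constraint (Vk k) (Gk k) :=
  ⟨Sum.inr ℓ :: (Finset.univ.erase ℓ).toList.map Sum.inl, {g : Gk k | g ℓ = 0}⟩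

lemma mem_Cpar (i : Fin k) : Cpar k hk i ∈ baseF k hk := by
  classical
  rcases eq_or_ne i ⟨0, hk⟩ with rfl | hne
  · simp [baseF, Cpar]
  · simp only [baseF, Finset.mem_union]
    left; left; left; right
    simp only [Finset.mem_image, Finset.mem_filter, Finset.mem_univ, true_and]
    exact ⟨i, hne, by simp [Cpar, hne]⟩

lemma mem_Cs (i : Fin k) : Cs k i ∈ baseF k hk := by
  classical
  simp only [baseF, Finset.mem_union]
  left; right
  simp only [Finset.mem_image, Finset.mem_univ, true_and]
  exact ⟨i, rfl⟩

lemma mem_Ce (ℓ i : Fin k) : Ce k ℓ i ∈ baseF k hk := by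
  classical
  simp only [baseF, Finset.mem_union]
  right
  simp only [Finset.mem_image, Finset.mem_univ, true_and]
  exact ⟨(ℓ, i), rfl⟩

lemma mem_Cbig (ℓ : Fin k) : Cbig k ℓ ∈ baseF k hk := by
  classical
  simp only [baseF, Finset.mem_union]
  left; left; right
  simp only [Finset.mem_image, Finset.mem_univ, true_and]
  exact ⟨ℓ, rfl⟩

end Clauses
section Atoms

variable (k : ℕ) (hk : 0 < k)

/-- Atom asserting clause `C` under the canonical variable assignment. -/
def atomC (C : Constraint (Vk k) (Gk k)) (hC : C ∈ baseF k hk) :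
    Fml (xorSig (Vk k) (Gk k) (baseF k hk)) :=
  .rel (Sum.inr ⟨C, hC⟩) (fun m => varIdx k (C.vars.get m))

lemma sat_atom (Hf : Constraint (Vk k) (Gk k) → Set (Gk k))
    (C : Constraint (Vk k) (Gk k)) (hC : C ∈ baseF k hk)
    (f : ℕ → (Vk k) × (Gk k)) :
    Fml.Sat (mkXorStruct (Vk k) (Gk k) (baseF k hk) Hf) f (atomC k hk C hC) ↔
      (∀ x ∈ C.vars, (f (varIdx k x)).1 = x) ∧
        (C.vars.map (fun x => (f (varIdx k x)).2)).sum ∈ Hf C := by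
  show ((∀ m : Fin C.vars.length, (f (varIdx k (C.vars.get m))).1 = C.vars.get m) ∧
      (∑ m : Fin C.vars.length, (f (varIdx k (C.vars.get m))).2) ∈ Hf C) ↔ _
  simp only [List.get_eq_getElem]
  rw [Fin.sum_univ_fun_getElem C.vars (fun x => (f (varIdx k x)).2)]
  constructor
  · rintro ⟨h1, h2⟩
    refine ⟨fun x hx => ?_, h2⟩
    obtain ⟨m, hm, rfl⟩ := List.mem_iff_getElem.1 hx
    exact h1 ⟨m, hm⟩
  · rintro ⟨h1, h2⟩
    exact ⟨fun m => h1 _ (List.getElem_mem _), h2⟩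

lemma sat_atom_unary (Hf : Constraint (Vk k) (Gk k) → Set (Gk k))
    (C : Constraint (Vk k) (Gk k)) (hC : C ∈ baseF k hk) (x : Vk k)
    (hx : C.vars = [x]) (f : ℕ → (Vk k) × (Gk k)) :
    Fml.Sat (mkXorStruct (Vk k) (Gk k) (baseF k hk) Hf) f (atomC k hk C hC) ↔
      (f (varIdx k x)).1 = x ∧ (f (varIdx k x)).2 ∈ Hf C := by
  rw [sat_atom, hx]
  simp

lemma sat_atom_big (Hf : Constraint (Vk k) (Gk k) → Set (Gk k)) (ℓ : Fin k)
    (f : ℕ → (Vk k) × (Gk k)) :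
    Fml.Sat (mkXorStruct (Vk k) (Gk k) (baseF k hk) Hf) f
        (atomC k hk (Cbig k ℓ) (mem_Cbig k hk ℓ)) ↔
      ((f ℓ.val).1 = Sum.inr ℓ ∧ ∀ i ∈ Finset.univ.erase ℓ, (f i.val).1 = Sum.inl i) ∧
        (f ℓ.val).2 + ∑ i ∈ Finset.univ.erase ℓ, (f i.val).2 ∈ Hf (Cbig k ℓ) := by
  rw [sat_atom]
  have h1 : (∀ x ∈ (Cbig k ℓ).vars, (f (varIdx k x)).1 = x) ↔
      ((f ℓ.val).1 = Sum.inr ℓ ∧ ∀ i ∈ Finset.univ.erase ℓ, (f i.val).1 = Sum.inl i) := by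
    simp only [Cbig, List.mem_cons, List.mem_map, Finset.mem_toList]
    constructor
    · intro h
      refine ⟨h _ (Or.inl rfl), fun i hi => h _ (Or.inr ⟨i, hi, rfl⟩)⟩
    · rintro ⟨h1, h2⟩ x (rfl | ⟨i, hi, rfl⟩)
      · exact h1
      · exact h2 i hi
  have h2 : ((Cbig k ℓ).vars.map (fun x => (f (varIdx k x)).2)).sum =
      (f ℓ.val).2 + ∑ i ∈ Finset.univ.erase ℓ, (f i.val).2 := by
    simp only [Cbig, List.map_cons, List.sum_cons, List.map_map]
    congr 1
    exact Finset.sum_map_toList (Finset.univ.erase ℓ) fun i : Fin k => (f i.val).2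
  rw [h1, h2]

lemma vars_atom (C : Constraint (Vk k) (Gk k)) (hC : C ∈ baseF k hk) :
    ∀ i ∈ (atomC k hk C hC).vars, i < k := by
  intro i hi
  simp only [atomC, Fml.vars, Finset.mem_image, Finset.mem_univ, true_and] at hi
  obtain ⟨m, rfl⟩ := hi
  exact varIdx_lt k _

lemma freeVars_atom (C : Constraint (Vk k) (Gk k)) (hC : C ∈ baseF k hk) :
    ∀ i ∈ (atomC k hk C hC).freeVars, i < k := by
  intro i hi
  simp only [atomC, Fml.freeVars, Finset.mem_image, Finset.mem_univ, true_and] at hi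
  obtain ⟨m, rfl⟩ := hi
  exact varIdx_lt k _

/-- The inner formula for index `ℓ`. -/
noncomputable def innerF (ℓ : Fin k) : Fml (xorSig (Vk k) (Gk k) (baseF k hk)) :=
  .ex ℓ.val (andList (atomC k hk (Cbig k ℓ) (mem_Cbig k hk ℓ) ::
    (List.finRange k).map fun i => atomC k hk (Ce k ℓ i) (mem_Ce k hk ℓ i)))

/-- The list of conjuncts of the body. -/
noncomputable def bodyL : List (Fml (xorSig (Vk k) (Gk k) (baseF k hk))) :=
  ((List.finRange k).map fun i => atomC k hk (Cpar k hk i) (mem_Cpar k hk i))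
  ++ ((List.finRange k).map fun i => atomC k hk (Cs k i) (mem_Cs k hk i))
  ++ ((List.finRange k).map fun ℓ => innerF k hk ℓ)

/-- The distinguishing sentence. -/
noncomputable def theSentence : Fml (xorSig (Vk k) (Gk k) (baseF k hk)) :=
  exList (List.range k) (andList (bodyL k hk))

end Atoms
section Distinct

variable (k : ℕ) (hk : 0 < k)

/-- The distinguishing clause. -/
def Codd : Constraint (Vk k) (Gk k) := ⟨[Sum.inl ⟨0, hk⟩], ODD k⟩

lemma baseD_eq : baseD k hk = {Codd k hk} := rfl

/-- An odd witness not lying in `{g | g 0 = 0}`. -/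
noncomputable def wOdd : Gk k := fun j => if j = ⟨0, hk⟩ then 1 else 0

lemma wOdd_mem_ODD : wOdd k hk ∈ ODD k := by
  simp [wOdd, ODD, Finset.sum_ite_eq']

lemma Cpar_ne (i : Fin k) (hi : i ≠ ⟨0, hk⟩) : Cpar k hk i ≠ Codd k hk := by
  intro h
  exact hi (by simpa [Cpar, Codd] using congrArg Constraint.vars h)

lemma Cs_ne (i : Fin k) : Cs k i ≠ Codd k hk := by
  rcases eq_or_ne i ⟨0, hk⟩ with rfl | hne
  · intro h
    have hH := congrArg Constraint.H h
    simp only [Cs, Codd] at hH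
    have h1 : wOdd k hk ∈ ODD k := wOdd_mem_ODD k hk
    rw [← hH] at h1
    simp [wOdd] at h1
  · intro h
    exact hne (by simpa [Cs, Codd] using congrArg Constraint.vars h)

lemma Ce_ne (ℓ i : Fin k) : Ce k ℓ i ≠ Codd k hk := by
  intro h
  simpa [Ce, Codd] using congrArg Constraint.vars h

lemma Cbig_ne (ℓ : Fin k) : Cbig k ℓ ≠ Codd k hk := by
  intro h
  simpa [Cbig, Codd] using congrArg Constraint.vars h

lemma hatH_of_ne (C : Constraint (Vk k) (Gk k)) (hC : C ≠ Codd k hk) :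
    hatH (baseD k hk) C = C.H := by
  ext g
  have : C ∉ baseD k hk := by
    rw [baseD_eq]; simpa using hC
  simp [hatH, this]

lemma zero_mem_hatH_Codd : (0 : Gk k) ∈ hatH (baseD k hk) (Codd k hk) := by
  have : Codd k hk ∈ baseD k hk := rfl
  simp only [hatH, Set.mem_setOf_eq]
  constructor
  · intro _
    simp [Codd, ODD]
  · intro h
    exact absurd this h

end Distinct
section Syntactic

lemma mem_foldr_union {σ : Signature} (F : Fml σ → Finset ℕ) (L : List (Fml σ)) (i : ℕ) :
    i ∈ L.foldr (fun ψ s => F ψ ∪ s) ∅ ↔ ∃ ψ ∈ L, i ∈ F ψ := by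
  induction L with
  | nil => simp
  | cons ψ L ih => simp [ih]

variable (k : ℕ) (hk : 0 < k)

lemma vars_innerF (ℓ : Fin k) : ∀ i ∈ (innerF k hk ℓ).vars, i < k := by
  intro i hi
  simp only [innerF, andList, Fml.vars, Finset.mem_insert, Finset.mem_union] at hi
  rcases hi with rfl | hi | hi
  · exact ℓ.isLt
  · obtain ⟨m, _, rfl⟩ := Finset.mem_image.1 hi
    exact varIdx_lt k _
  · have := vars_andList _ hi
    simp only [Finset.mem_insert, mem_foldr_union, List.mem_map] at this
    rcases this with rfl | ⟨ψ, ⟨j, _, rfl⟩, hiψ⟩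
    · exact hk
    · exact vars_atom k hk _ _ i hiψ

lemma freeVars_innerF (ℓ : Fin k) : ∀ i ∈ (innerF k hk ℓ).freeVars, i < k := by
  intro i hi
  simp only [innerF, andList, Fml.freeVars, Finset.mem_erase, Finset.mem_union] at hi
  rcases hi.2 with hi2 | hi2
  · obtain ⟨m, _, rfl⟩ := Finset.mem_image.1 hi2
    exact varIdx_lt k _
  · have := freeVars_andList _ hi2
    simp only [Finset.mem_insert, mem_foldr_union, List.mem_map] at this
    rcases this with rfl | ⟨ψ, ⟨j, _, rfl⟩, hiψ⟩
    · exact hk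
    · exact freeVars_atom k hk _ _ i hiψ

lemma mem_bodyL (ψ : Fml (xorSig (Vk k) (Gk k) (baseF k hk))) :
    ψ ∈ bodyL k hk ↔
      (∃ i : Fin k, ψ = atomC k hk (Cpar k hk i) (mem_Cpar k hk i)) ∨
      (∃ i : Fin k, ψ = atomC k hk (Cs k i) (mem_Cs k hk i)) ∨
      (∃ ℓ : Fin k, ψ = innerF k hk ℓ) := by
  simp only [bodyL, List.mem_append, List.mem_map, List.mem_finRange, true_and]
  constructor
  · rintro ((⟨i, rfl⟩ | ⟨i, rfl⟩) | ⟨ℓ, rfl⟩)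
    · exact Or.inl ⟨i, rfl⟩
    · exact Or.inr (Or.inl ⟨i, rfl⟩)
    · exact Or.inr (Or.inr ⟨ℓ, rfl⟩)
  · rintro (⟨i, rfl⟩ | ⟨i, rfl⟩ | ⟨ℓ, rfl⟩)
    · exact Or.inl (Or.inl ⟨i, rfl⟩)
    · exact Or.inl (Or.inr ⟨i, rfl⟩)
    · exact Or.inr ⟨ℓ, rfl⟩

lemma vars_bodyL (ψ : Fml (xorSig (Vk k) (Gk k) (baseF k hk))) (hψ : ψ ∈ bodyL k hk) :
    ∀ i ∈ ψ.vars, i < k := by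
  rw [mem_bodyL] at hψ
  rcases hψ with ⟨i, rfl⟩ | ⟨i, rfl⟩ | ⟨ℓ, rfl⟩
  · exact vars_atom k hk _ _
  · exact vars_atom k hk _ _
  · exact vars_innerF k hk ℓ

lemma freeVars_bodyL (ψ : Fml (xorSig (Vk k) (Gk k) (baseF k hk))) (hψ : ψ ∈ bodyL k hk) :
    ∀ i ∈ ψ.freeVars, i < k := by
  rw [mem_bodyL] at hψ
  rcases hψ with ⟨i, rfl⟩ | ⟨i, rfl⟩ | ⟨ℓ, rfl⟩
  · exact freeVars_atom k hk _ _
  · exact freeVars_atom k hk _ _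
  · exact freeVars_innerF k hk ℓ

lemma usesVars_theSentence : UsesVars k (theSentence k hk) := by
  intro i hi
  have := vars_exList _ _ hi
  simp only [Finset.mem_union, List.mem_toFinset, List.mem_range] at this
  rcases this with h | h
  · exact h
  · have := vars_andList _ h
    simp only [Finset.mem_insert, mem_foldr_union] at this
    rcases this with rfl | ⟨ψ, hψ, hiψ⟩
    · exact hk
    · exact vars_bodyL k hk ψ hψ i hiψ

lemma isSentence_theSentence : IsSentence (theSentence k hk) := by
  rw [IsSentence, Finset.eq_empty_iff_forall_notMem]
  intro i hi
  have := freeVars_exList _ _ hi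
  simp only [Finset.mem_sdiff, List.mem_toFinset, List.mem_range] at this
  obtain ⟨h1, h2⟩ := this
  apply h2
  have := freeVars_andList _ h1
  simp only [Finset.mem_insert, mem_foldr_union] at this
  rcases this with rfl | ⟨ψ, hψ, hiψ⟩
  · exact hk
  · exact freeVars_bodyL k hk ψ hψ i hiψ

end Syntactic
section Semantic

variable (k : ℕ) (hk : 0 < k)

lemma satS_A :
    SatS (Astruct (Vk k) (Gk k) (baseF k hk) (baseD k hk)) (theSentence k hk) := by
  classical
  intro f
  set g : ℕ → (Vk k) × (Gk k) :=
    fun n => if h : n < k then (Sum.inl ⟨n, h⟩, (0 : Gk k)) else f n with hgdef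
  have hgval : ∀ i : Fin k, g i.val = (Sum.inl i, (0 : Gk k)) := by
    intro i; simp [hgdef, i.isLt]
  apply sat_exList_of _ f g
  · intro i hi
    simp only [List.mem_range] at hi
    simp [hgdef, hi]
  · rw [sat_andList]
    intro ψ hψ
    rw [mem_bodyL] at hψ
    rcases hψ with ⟨i, rfl⟩ | ⟨i, rfl⟩ | ⟨ℓ, rfl⟩
    · rw [sat_atom_unary k hk _ _ _ (Sum.inl i) rfl]
      refine ⟨?_, ?_⟩
      · show (g i.val).1 = Sum.inl i
        rw [hgval]
      · show (g i.val).2 ∈ hatH (baseD k hk) (Cpar k hk i)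
        rw [hgval]
        rcases eq_or_ne i ⟨0, hk⟩ with rfl | hne
        · have hCC : Cpar k hk ⟨0, hk⟩ = Codd k hk := by simp [Cpar, Codd]
          rw [hCC]
          exact zero_mem_hatH_Codd k hk
        · rw [hatH_of_ne k hk _ (Cpar_ne k hk i hne)]
          simp [Cpar, hne, EVEN]
    · rw [sat_atom_unary k hk _ _ _ (Sum.inl i) rfl]
      refine ⟨?_, ?_⟩
      · show (g i.val).1 = Sum.inl i
        rw [hgval]
      · show (g i.val).2 ∈ hatH (baseD k hk) (Cs k i)
        rw [hgval, hatH_of_ne k hk _ (Cs_ne k hk i)]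
        simp [Cs]
    · refine ⟨(Sum.inr ℓ, (0 : Gk k)), ?_⟩
      set g' := Function.update g ℓ.val (Sum.inr ℓ, (0 : Gk k)) with hg'def
      have hg'ℓ : g' ℓ.val = (Sum.inr ℓ, (0 : Gk k)) := Function.update_self _ _ _
      have hg'i : ∀ i : Fin k, i ≠ ℓ → g' i.val = (Sum.inl i, (0 : Gk k)) := by
        intro i hne
        rw [hg'def, Function.update_of_ne (fun hc => hne (Fin.val_injective hc)), hgval]
      rw [sat_andList]
      intro ψ hψ
      simp only [List.mem_cons, List.mem_map, List.mem_finRange, true_and] at hψ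
      rcases hψ with rfl | ⟨i, rfl⟩
      · rw [sat_atom_big k hk]
        refine ⟨⟨?_, ?_⟩, ?_⟩
        · rw [hg'ℓ]
        · intro i hi
          rw [hg'i i (Finset.mem_erase.1 hi).1]
        · rw [hatH_of_ne k hk _ (Cbig_ne k hk ℓ)]
          have hz : ∑ i ∈ Finset.univ.erase ℓ, (g' i.val).2 = 0 := by
            apply Finset.sum_eq_zero
            intro i hi
            rw [hg'i i (Finset.mem_erase.1 hi).1]
          rw [hg'ℓ, hz]
          simp [Cbig]
      · rw [sat_atom_unary k hk _ _ _ (Sum.inr ℓ) rfl]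
        refine ⟨?_, ?_⟩
        · show (g' ℓ.val).1 = Sum.inr ℓ
          rw [hg'ℓ]
        · show (g' ℓ.val).2 ∈ hatH (baseD k hk) (Ce k ℓ i)
          rw [hg'ℓ, hatH_of_ne k hk _ (Ce_ne k hk ℓ i)]
          simp [Ce]

lemma not_satS_B :
    ¬ SatS (Bstruct (Vk k) (Gk k) (baseF k hk)) (theSentence k hk) := by
  classical
  intro hS
  obtain ⟨g, hgsat⟩ := exists_sat_of_sat_exList _
    (fun _ => ((Sum.inl (⟨0, hk⟩ : Fin k), (0 : Gk k)) : (Vk k) × (Gk k))) _ _ (hS _)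
  rw [sat_andList] at hgsat
  set h : Fin k → Gk k := fun i => (g i.val).2 with hhdef
  have hpar : ∀ i : Fin k, ∑ j, h i j = if i = ⟨0, hk⟩ then 1 else 0 := by
    intro i
    have hs := hgsat _ ((mem_bodyL k hk _).2 (Or.inl ⟨i, rfl⟩))
    rw [sat_atom_unary k hk _ _ _ (Sum.inl i) rfl] at hs
    have h2 := hs.2
    simp only [Cpar] at h2
    rcases eq_or_ne i ⟨0, hk⟩ with rfl | hne
    · simp only [if_pos rfl] at h2 ⊢
      exact h2
    · simp only [if_neg hne] at h2 ⊢
      exact h2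
  have hdiag : ∀ i : Fin k, h i i = 0 := by
    intro i
    have hs := hgsat _ ((mem_bodyL k hk _).2 (Or.inr (Or.inl ⟨i, rfl⟩)))
    rw [sat_atom_unary k hk _ _ _ (Sum.inl i) rfl] at hs
    exact hs.2
  have hsum : ∀ ℓ : Fin k, ∑ i, h i ℓ = 0 := by
    intro ℓ
    have hs := hgsat _ ((mem_bodyL k hk _).2 (Or.inr (Or.inr ⟨ℓ, rfl⟩)))
    obtain ⟨a, ha⟩ := hs
    rw [sat_andList] at ha
    set g' := Function.update g ℓ.val a with hg'def
    have hgl : g' ℓ.val = a := Function.update_self _ _ _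
    have ha2 : a.2 = 0 := by
      funext i
      have hc := ha _ (List.mem_cons_of_mem _ (List.mem_map.2 ⟨i, List.mem_finRange i, rfl⟩))
      rw [sat_atom_unary k hk _ _ _ (Sum.inr ℓ) rfl] at hc
      have hc2 := hc.2
      show a.2 i = (0 : ZMod 2)
      have : (g' ℓ.val).2 ∈ (Ce k ℓ i).H := hc2
      rw [hgl] at this
      exact this
    have hbig := ha _ List.mem_cons_self
    rw [sat_atom_big k hk] at hbig
    have hsumval : ((g' ℓ.val).2 + ∑ i ∈ Finset.univ.erase ℓ, (g' i.val).2) ℓ = 0 :=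
      hbig.2
    have hrest : ∀ i ∈ Finset.univ.erase ℓ, (g' i.val).2 = h i := by
      intro i hi
      rw [hg'def,
        Function.update_of_ne (fun hc => (Finset.mem_erase.1 hi).1 (Fin.val_injective hc))]
    rw [hgl, ha2, Finset.sum_congr rfl hrest] at hsumval
    rw [← Finset.sum_erase_add _ _ (Finset.mem_univ ℓ), hdiag, add_zero]
    simpa using hsumval
  have h0 : (0 : ZMod 2) = ∑ ℓ : Fin k, ∑ i : Fin k, h i ℓ := by
    simp [hsum]
  rw [Finset.sum_comm] at h0
  simp only [hpar] at h0
  rw [Finset.sum_ite_eq' Finset.univ (⟨0, hk⟩ : Fin k) (fun _ => (1 : ZMod 2))] at h0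
  simp at h0

end Semantic

/-- Lemma 24 of the paper. For every odd `k ≥ 3` there is a sentence
of `L^k` over the common signature of `𝒜(F)` and `ℬ(F)` that is true in `𝒜 = 𝒜(F)`
and false in `ℬ = ℬ(F)`. -/
theorem statement_15 (k : ℕ) (hk : 3 ≤ k) (hkodd : Odd k) :
    ∃ φ : Fml (xorSig (Vk k) (Gk k) (baseF k (by omega))),
      UsesVars k φ ∧ IsSentence φ ∧
      Distinguishes
        (Astruct (Vk k) (Gk k) (baseF k (by omega)) (baseD k (by omega)))
        (Bstruct (Vk k) (Gk k) (baseF k (by omega))) φ := by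
  have hk0 : 0 < k := by omega
  exact ⟨theSentence k hk0, usesVars_theSentence k hk0, isSentence_theSentence k hk0,
    satS_A k hk0, not_satS_B k hk0⟩

end QVT
end
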